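/- arXiv:1605.07416 — 6 statements merged into one kernel-verified Lean document; each statement's English description precedes it below -/
import Mathlib

section
/- Let p ∈ (0,1) and C > 0. Then there does not exist a family of randomised bandit strategies (one strategy for each horizon T ≥ 1 and number of arms K ≥ 2) such that for all T, all K, all loss sequences ℓ_{1:T} ∈ [0,1]^{KT}, and all δ ∈ (0,1), one has P( R_T(ℓ_{1:T}) ≥ C·√((K−1)·T)·(log(1/δ))^p ) ≤ δ, where the probability is over the strategy's internal randomisation. -/
open MeasureTheory ProbabilityTheory Real
open scoped ENNReal NNReal Classical

namespace BanditLB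

structure Strategy (K : ℕ) (Ω : Type*) [MeasurableSpace Ω] where
  μ : Measure Ω
  prob : IsProbabilityMeasure μ
  act : (ℕ → Fin K → ℝ) → ℕ → Ω → Fin K
  meas_act : ∀ t : ℕ, Measurable fun p : (ℕ → Fin K → ℝ) × Ω => act p.1 t p.2
  adapted : ∀ ℓ ℓ' : ℕ → Fin K → ℝ, ∀ t : ℕ, ∀ ω : Ω,
    (∀ s < t, act ℓ s ω = act ℓ' s ω ∧ ℓ s (act ℓ s ω) = ℓ' s (act ℓ s ω)) →
    act ℓ t ω = act ℓ' t ω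

variable {K : ℕ} {Ω : Type*} [MeasurableSpace Ω]

noncomputable def regret (S : Strategy K Ω) (T : ℕ) (ℓ : ℕ → Fin K → ℝ) (ω : Ω) : ℝ :=
  ∑ t ∈ Finset.range T, ℓ t (S.act ℓ t ω) - ⨅ i : Fin K, ∑ t ∈ Finset.range T, ℓ t i

def numPlays (S : Strategy K Ω) (ℓ : ℕ → Fin K → ℝ) (i : Fin K) (t : ℕ) (ω : Ω) : ℕ :=
  ((Finset.range t).filter fun s => S.act ℓ s ω = i).card

/-- The joint law of (loss sequence, internal randomisation) when the loss sequence is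
drawn from `ν` independently of the internal randomisation. -/
noncomputable def joint (S : Strategy K Ω) (ν : Measure (ℕ → Fin K → ℝ)) :
    Measure ((ℕ → Fin K → ℝ) × Ω) := ν.prod S.μ

/-- `ν` is the law of an i.i.d. sequence with common distribution `Q`:
`ν` is a probability measure all of whose finite-dimensional marginals are product measures. -/
def IsIIDSeq {β : Type*} [MeasurableSpace β] (ν : Measure (ℕ → β)) (Q : Measure β) : Prop :=
  IsProbabilityMeasure ν ∧
    ∀ n : ℕ, ν.map (fun f (s : Fin n) => f (s : ℕ)) = Measure.pi fun _ : Fin n => Q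

/-- The Kullback–Leibler divergence (with value `∞` unless `P ≪ Q` and the
log-likelihood ratio is `P`-integrable). -/
noncomputable def klDiv {α : Type*} [MeasurableSpace α] (P Q : Measure α) : ℝ≥0∞ :=
  if P ≪ Q ∧ Integrable (llr P Q) P then ENNReal.ofReal (∫ x, llr P Q x ∂P) else ⊤

/-- The Bernoulli distribution with parameter `p`, as a measure on `ℝ` (mass `p` at `1`,
mass `1 - p` at `0`). -/
noncomputable def bern (p : ℝ) : Measure ℝ :=
  ENNReal.ofReal p • Measure.dirac 1 + ENNReal.ofReal (1 - p) • Measure.dirac 0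

noncomputable def clip01 (x : ℝ) : ℝ := min 1 (max 0 x)

/-- The correlated clipped-Gaussian loss sequence of environment `j` built from the
Gaussian sequence `z` (arm `0` plays the role of arm `1` in the paper). -/
noncomputable def clipEnvLoss {K : ℕ} [NeZero K] (Δ : ℝ) (j : Fin K) (z : ℕ → ℝ) :
    ℕ → Fin K → ℝ :=
  fun t i => if i = 0 then clip01 (z t - Δ)
    else if i = j then clip01 (z t - 2 * Δ) else clip01 (z t)

/-- The variance used in the clipped-Gaussian environments, `σ² = 1/(32 log 2)`. -/
noncomputable def sigSq : ℝ := 1 / (32 * Real.log 2)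

/-- The law of the clipped-Gaussian environment `j`: the image of the law `γ` of the
i.i.d. Gaussian sequence under the loss map. -/
noncomputable def clipEnv {K : ℕ} [NeZero K] (Δ : ℝ) (j : Fin K)
    (γ : Measure (ℕ → ℝ)) : Measure (ℕ → Fin K → ℝ) :=
  γ.map (clipEnvLoss Δ j)

/-!
With two arms, compare the environment `twoArmLoss ∅` (arm `0` loses `1/2`, arm `1` loses `5/8`)
with the environments `twoArmLoss A`, in which arm `1` loses only `1/8` in the rounds of `A`.
Applied to `twoArmLoss ∅` at `δ = 1/2`, the bound forces the strategy to play arm `0` in all but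
`n ≈ 8C√T` rounds, with probability at least `1/2`. For such an `ω`, a set `A` of rounds in which
arm `0` was played is invisible to the strategy, which therefore incurs regret at least `(T - n)/8`
in `twoArmLoss A` as soon as `A` holds half of these rounds. A fraction `2^-(n+1)` of all
`A ⊆ [0, T)` qualify, so averaging over `A` yields one fixed environment in which this regret
occurs with probability at least `2^-(n+2)`. At `δ = 2^-(n+3)` the bound only allows regret of
order `C√T (n log 2)^p ≈ T^((1+p)/2)`, which is below `(T - n)/8` for large `T` since `p < 1`.
-/

open Finset Filter

theorem two_pow_card_le_two_mul_card_powerset_filter {α : Type*} [DecidableEq α]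
    (s : Finset α) : 2 ^ #s ≤ 2 * #{A ∈ s.powerset | #s ≤ 2 * #A} := by
  have hsplit := card_filter_add_card_filter_not (s := s.powerset) (fun A => #s ≤ 2 * #A)
  have hcompl : #{A ∈ s.powerset | ¬ #s ≤ 2 * #A} ≤ #{A ∈ s.powerset | #s ≤ 2 * #A} := by
    refine card_le_card_of_injOn (s \ ·) (fun A hA => ?_) (fun A hA A' hA' h => ?_)
    · simp only [coe_filter, mem_powerset, Set.mem_ofPred_eq] at hA ⊢
      refine ⟨sdiff_subset, ?_⟩
      rw [card_sdiff_of_subset hA.1]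
      omega
    · simp only [coe_filter, mem_powerset, Set.mem_ofPred_eq] at hA hA'
      rw [← Finset.sdiff_sdiff_eq_self hA.1, ← Finset.sdiff_sdiff_eq_self hA'.1]
      exact congrArg (s \ ·) h
  rw [card_powerset] at hsplit
  omega

theorem two_pow_card_le_two_pow_mul_card_powerset_filter {α : Type*} [DecidableEq α]
    {s G : Finset α} {n : ℕ} (hG : G ⊆ s) (hs : #s ≤ #G + n) :
    2 ^ #s ≤ 2 ^ (n + 1) * #{A ∈ s.powerset | A ⊆ G ∧ #G ≤ 2 * #A} := by
  have hsub : {A ∈ G.powerset | #G ≤ 2 * #A} ⊆ {A ∈ s.powerset | A ⊆ G ∧ #G ≤ 2 * #A} := by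
    intro A hA
    simp only [mem_filter, mem_powerset] at hA ⊢
    exact ⟨hA.1.trans hG, hA⟩
  calc 2 ^ #s ≤ 2 ^ (#G + n) := Nat.pow_le_pow_right two_pos hs
    _ = 2 ^ n * 2 ^ #G := by ring
    _ ≤ 2 ^ n * (2 * #{A ∈ G.powerset | #G ≤ 2 * #A}) :=
      Nat.mul_le_mul_left _ (two_pow_card_le_two_mul_card_powerset_filter G)
    _ ≤ 2 ^ (n + 1) * #{A ∈ s.powerset | A ⊆ G ∧ #G ≤ 2 * #A} := by
      rw [pow_succ, mul_assoc]
      exact Nat.mul_le_mul_left _ (Nat.mul_le_mul_left _ (card_le_card hsub))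

theorem exists_measure_le_mul_measure {ι : Type*} (μ : Measure Ω) {s : Finset ι}
    (hs : s.Nonempty) {E : ι → Set Ω} [∀ ω, DecidablePred (ω ∈ E ·)]
    (hE : ∀ i ∈ s, MeasurableSet (E i)) {B : Set Ω} {c : ℝ≥0∞}
    (hB : ∀ ω ∈ B, (#s : ℝ≥0∞) ≤ c * #{i ∈ s | ω ∈ E i}) :
    ∃ i ∈ s, μ B ≤ c * μ (E i) := by
  have hind : ∀ i ∈ s, Measurable ((E i).indicator (1 : Ω → ℝ≥0∞)) := fun i hi =>
    measurable_one.indicator (hE i hi)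
  set f : Ω → ℝ≥0∞ := fun ω => c * ∑ i ∈ s, (E i).indicator 1 ω
  have hf : ∀ ω, f ω = c * #{i ∈ s | ω ∈ E i} := by simp [f, Set.indicator_apply]
  refine ENNReal.exists_le_of_sum_le hs ?_
  calc ∑ _i ∈ s, μ B = #s * μ B := by rw [sum_const, nsmul_eq_mul]
    _ ≤ #s * μ {ω | #s ≤ f ω} := by
        gcongr
        intro ω hω
        simpa [hf] using hB ω hω
    _ ≤ ∫⁻ ω, f ω ∂μ := mul_meas_ge_le_lintegral₀ (by fun_prop) _
    _ = ∑ i ∈ s, c * μ (E i) := by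
        rw [lintegral_const_mul _ (Finset.measurable_sum _ hind), lintegral_finsetSum _ hind,
          mul_sum]
        exact sum_congr rfl fun i hi => by rw [lintegral_indicator_one (hE i hi)]

namespace Strategy

variable (S : Strategy K Ω)

theorem act_eq_of_forall_lt {ℓ ℓ' : ℕ → Fin K → ℝ} {T : ℕ} {ω : Ω}
    (h : ∀ s < T, ℓ s (S.act ℓ s ω) = ℓ' s (S.act ℓ s ω)) {t : ℕ} (ht : t ≤ T) :
    S.act ℓ t ω = S.act ℓ' t ω := by
  induction t using Nat.strong_induction_on with
  | _ t ih =>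
    exact S.adapted ℓ ℓ' t ω fun s hs => ⟨ih s hs (hs.le.trans ht), h s (hs.trans_le ht)⟩

def playTimes (ℓ : ℕ → Fin K → ℝ) (i : Fin K) (T : ℕ) (ω : Ω) : Finset ℕ :=
  {t ∈ range T | S.act ℓ t ω = i}

theorem playTimes_subset_range (ℓ : ℕ → Fin K → ℝ) (i : Fin K) (T : ℕ) (ω : Ω) :
    S.playTimes ℓ i T ω ⊆ range T :=
  filter_subset _ _

theorem measurableSet_setOf_playTimes (ℓ : ℕ → Fin K → ℝ) (i : Fin K) (T : ℕ)
    (P : Finset ℕ → Prop) : MeasurableSet {ω | P (S.playTimes ℓ i T ω)} := by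
  let a : Ω → Fin T → Fin K := fun ω t => S.act ℓ t ω
  have ha : Measurable a :=
    measurable_pi_lambda _ fun t => (S.meas_act t).comp measurable_prodMk_left
  have hdet : ∀ ω ω', a ω = a ω' → S.playTimes ℓ i T ω = S.playTimes ℓ i T ω' := by
    intro ω ω' h
    refine filter_congr fun t ht => ?_
    rw [show S.act ℓ t ω = S.act ℓ t ω' from congrFun h ⟨t, mem_range.1 ht⟩]
  have : {ω | P (S.playTimes ℓ i T ω)} = a ⁻¹' (a '' {ω | P (S.playTimes ℓ i T ω)}) := by
    ext ω
    refine ⟨fun h => ⟨ω, h, rfl⟩, fun ⟨ω', h', e⟩ => ?_⟩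
    simpa [hdet ω' ω e] using h'
  rw [this]
  exact ha (Set.to_countable _).measurableSet

theorem sum_sub_le_regret (T : ℕ) (ℓ : ℕ → Fin K → ℝ) (ω : Ω) (i : Fin K) :
    ∑ t ∈ range T, ℓ t (S.act ℓ t ω) - ∑ t ∈ range T, ℓ t i ≤ regret S T ℓ ω :=
  sub_le_sub_left (ciInf_le (Set.finite_range fun j => ∑ t ∈ range T, ℓ t j).bddBelow i) _

end Strategy

noncomputable def twoArmLoss (A : Finset ℕ) : ℕ → Fin 2 → ℝ :=
  fun t i => if i = 0 then 1 / 2 else if t ∈ A then 1 / 8 else 5 / 8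

theorem twoArmLoss_mem_Icc (A : Finset ℕ) (t : ℕ) (i : Fin 2) :
    twoArmLoss A t i ∈ Set.Icc (0 : ℝ) 1 := by
  unfold twoArmLoss
  split_ifs <;> norm_num

theorem sum_twoArmLoss_zero (A : Finset ℕ) (T : ℕ) :
    ∑ t ∈ range T, twoArmLoss A t 0 = T / 2 := by
  simp only [twoArmLoss, if_true, sum_const, card_range, nsmul_eq_mul]
  ring

theorem sum_twoArmLoss_one {A : Finset ℕ} {T : ℕ} (hA : A ⊆ range T) :
    ∑ t ∈ range T, twoArmLoss A t 1 = 5 / 8 * T - #A / 2 := by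
  have hterm : ∀ t ∈ range T, twoArmLoss A t 1 = 5 / 8 - if t ∈ A then 1 / 2 else 0 := by
    intro t _
    by_cases htA : t ∈ A <;> norm_num [twoArmLoss, htA]
  rw [sum_congr rfl hterm, sum_sub_distrib, sum_ite_mem, inter_eq_right.2 hA, sum_const,
    sum_const, card_range, nsmul_eq_mul, nsmul_eq_mul]
  ring

section TwoArms

variable (S : Strategy 2 Ω) {T : ℕ} {ω : Ω} {A : Finset ℕ}

theorem act_twoArmLoss_eq (hA : A ⊆ S.playTimes (twoArmLoss ∅) 0 T ω) {t : ℕ} (ht : t ≤ T) :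
    S.act (twoArmLoss A) t ω = S.act (twoArmLoss ∅) t ω := by
  refine (S.act_eq_of_forall_lt (fun s hs => ?_) ht).symm
  by_cases h0 : S.act (twoArmLoss ∅) s ω = 0
  · simp [twoArmLoss, h0]
  · have hsA : s ∉ A := fun hs' => h0 (mem_filter.1 (hA hs')).2
    simp [twoArmLoss, h0, hsA]

theorem sum_twoArmLoss_act (hA : A ⊆ S.playTimes (twoArmLoss ∅) 0 T ω) :
    ∑ t ∈ range T, twoArmLoss A t (S.act (twoArmLoss A) t ω) =
      5 / 8 * T - #(S.playTimes (twoArmLoss ∅) 0 T ω) / 8 := by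
  set G := S.playTimes (twoArmLoss ∅) 0 T ω
  have hterm : ∀ t ∈ range T, twoArmLoss A t (S.act (twoArmLoss A) t ω) =
      5 / 8 - if t ∈ G then 1 / 8 else 0 := by
    intro t ht
    rw [act_twoArmLoss_eq S hA (mem_range.1 ht).le]
    by_cases h0 : S.act (twoArmLoss ∅) t ω = 0
    · have htG : t ∈ G := mem_filter.2 ⟨ht, h0⟩
      norm_num [twoArmLoss, h0, htG]
    · have htG : t ∉ G := fun h => h0 (mem_filter.1 h).2
      have htA : t ∉ A := fun h => htG (hA h)
      simp [twoArmLoss, h0, htG, htA]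
  rw [sum_congr rfl hterm, sum_sub_distrib, sum_ite_mem,
    inter_eq_right.2 (S.playTimes_subset_range _ _ T ω), sum_const, sum_const, card_range,
    nsmul_eq_mul, nsmul_eq_mul]
  ring

theorem le_regret_twoArmLoss_empty (T : ℕ) (ω : Ω) :
    ((T : ℝ) - #(S.playTimes (twoArmLoss ∅) 0 T ω)) / 8 ≤ regret S T (twoArmLoss ∅) ω := by
  have h := S.sum_sub_le_regret T (twoArmLoss ∅) ω 0
  rw [sum_twoArmLoss_act S (empty_subset _), sum_twoArmLoss_zero] at h
  linarith

theorem le_regret_twoArmLoss (hA : A ⊆ S.playTimes (twoArmLoss ∅) 0 T ω) :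
    (#A : ℝ) / 2 - #(S.playTimes (twoArmLoss ∅) 0 T ω) / 8 ≤ regret S T (twoArmLoss A) ω := by
  have h := S.sum_sub_le_regret T (twoArmLoss A) ω 1
  rw [sum_twoArmLoss_act S hA,
    sum_twoArmLoss_one (hA.trans (S.playTimes_subset_range _ _ T ω))] at h
  linarith

theorem half_le_measure_card_playTimes (T n : ℕ)
    (h0 : S.μ {ω | (n : ℝ) / 8 < regret S T (twoArmLoss ∅) ω} ≤ 2⁻¹) :
    2⁻¹ ≤ S.μ {ω | T ≤ #(S.playTimes (twoArmLoss ∅) 0 T ω) + n} := by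
  have := S.prob
  set B := {ω | T ≤ #(S.playTimes (twoArmLoss ∅) 0 T ω) + n}
  have hBc : Bᶜ ⊆ {ω | (n : ℝ) / 8 < regret S T (twoArmLoss ∅) ω} := by
    intro ω hω
    have hlt : (#(S.playTimes (twoArmLoss ∅) 0 T ω) : ℝ) + n < T := by
      exact_mod_cast not_le.1 (Set.notMem_of_mem_compl hω)
    have := le_regret_twoArmLoss_empty S T ω
    simp only [Set.mem_ofPred_eq]
    linarith
  rw [← ENNReal.one_sub_inv_two, ← measure_univ (μ := S.μ), tsub_le_iff_right]
  exact (measure_univ_le_add_compl B).trans (add_le_add_right ((measure_mono hBc).trans h0) _)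

theorem exists_measure_le_regret_twoArmLoss (T n : ℕ)
    (h0 : S.μ {ω | (n : ℝ) / 8 < regret S T (twoArmLoss ∅) ω} ≤ 2⁻¹) :
    ∃ A : Finset ℕ, (2 ^ (n + 2) : ℝ≥0∞)⁻¹ ≤
      S.μ {ω | ((T : ℝ) - n) / 8 ≤ regret S T (twoArmLoss A) ω} := by
  set G := S.playTimes (twoArmLoss ∅) 0 T
  set E : Finset ℕ → Set Ω := fun A => {ω | T ≤ #(G ω) + n ∧ A ⊆ G ω ∧ #(G ω) ≤ 2 * #A}
  have hcount : ∀ ω ∈ {ω | T ≤ #(G ω) + n},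
      (#(range T).powerset : ℝ≥0∞) ≤ 2 ^ (n + 1) * #{A ∈ (range T).powerset | ω ∈ E A} := by
    intro ω hω
    have hfilter : {A ∈ (range T).powerset | ω ∈ E A} =
        {A ∈ (range T).powerset | A ⊆ G ω ∧ #(G ω) ≤ 2 * #A} :=
      filter_congr fun A _ => and_iff_right hω
    have h := two_pow_card_le_two_pow_mul_card_powerset_filter
      (S.playTimes_subset_range _ _ T ω) (by rwa [card_range])
    rw [hfilter, card_powerset]
    exact_mod_cast h
  obtain ⟨A, -, hA⟩ := exists_measure_le_mul_measure S.μ (powerset_nonempty _)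
    (fun A _ => S.measurableSet_setOf_playTimes _ _ T fun G => T ≤ #G + n ∧ A ⊆ G ∧ #G ≤ 2 * #A)
    hcount
  have hEA : E A ⊆ {ω | ((T : ℝ) - n) / 8 ≤ regret S T (twoArmLoss A) ω} := by
    rintro ω ⟨hTG, hAG, hGA⟩
    have hreg := le_regret_twoArmLoss S hAG
    have hTG' : (T : ℝ) ≤ #(G ω) + n := by exact_mod_cast hTG
    have hGA' : (#(G ω) : ℝ) ≤ 2 * #A := by exact_mod_cast hGA
    simp only [Set.mem_ofPred_eq]
    linarith
  have hinv : (2 ^ (n + 2) : ℝ≥0∞)⁻¹ = 2⁻¹ / 2 ^ (n + 1) := by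
    rw [div_eq_mul_inv, ← ENNReal.mul_inv (by simp) (by simp), ← pow_succ']
  refine ⟨A, hinv ▸ ENNReal.div_le_of_le_mul' ?_⟩
  calc 2⁻¹ ≤ S.μ {ω | T ≤ #(G ω) + n} := half_le_measure_card_playTimes S T n h0
    _ ≤ 2 ^ (n + 1) * S.μ (E A) := hA
    _ ≤ _ := by gcongr

end TwoArms

theorem eventually_mul_rpow_le_self {p : ℝ} (hp : p < 1) (D : ℝ) :
    ∀ᶠ x : ℝ in atTop, D * x ^ p ≤ x := by
  filter_upwards [(tendsto_rpow_atTop (sub_pos.2 hp)).eventually_ge_atTop D,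
    eventually_gt_atTop 0] with x hD hx
  calc D * x ^ p ≤ x ^ (1 - p) * x ^ p := by gcongr
    _ = x := by rw [← rpow_add hx, sub_add_cancel, rpow_one]

theorem exists_horizon {p C : ℝ} (hp0 : 0 ≤ p) (hp1 : p < 1) (hC : 0 < C) :
    ∃ T n : ℕ, 1 ≤ T ∧ 8 * C * √T ≤ n ∧ 8 * C * √T * ((n + 3) * log 2) ^ p + n ≤ T := by
  set D := 8 * C * (8 * C + 4) + 8 * C + 1
  obtain ⟨M, hMD, hM1⟩ := ((tendsto_natCast_atTop_atTop.eventually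
    (eventually_mul_rpow_le_self hp1 D)).and (eventually_ge_atTop 1)).exists
  have hM : (1 : ℝ) ≤ M := by exact_mod_cast hM1
  have hMp : 1 ≤ (M : ℝ) ^ p := one_le_rpow hM hp0
  set n := ⌈8 * C * M⌉₊
  have hn : (n : ℝ) < 8 * C * M + 1 := Nat.ceil_lt_add_one (by positivity)
  have hlog : (n + 3) * log 2 ≤ (8 * C + 4) * M := by
    have hlog2 : log 2 < 1 := log_two_lt_d9.trans (by norm_num)
    nlinarith [log_pos one_lt_two]
  have hpow : ((n + 3) * log 2) ^ p ≤ (8 * C + 4) * (M : ℝ) ^ p :=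
    calc ((n + 3) * log 2) ^ p ≤ ((8 * C + 4) * M) ^ p := by gcongr
      _ = (8 * C + 4) ^ p * (M : ℝ) ^ p := mul_rpow (by positivity) (by positivity)
      _ ≤ (8 * C + 4) * (M : ℝ) ^ p := by
          gcongr
          exact rpow_le_self_of_one_le (by linarith) hp1.le
  have hsqrt : √((M * M : ℕ) : ℝ) = M := by push_cast; exact sqrt_mul_self (by positivity)
  refine ⟨M * M, n, Nat.one_le_iff_ne_zero.2 (by positivity), hsqrt ▸ Nat.le_ceil _, ?_⟩
  rw [hsqrt]
  push_cast
  calc 8 * C * M * ((n + 3) * log 2) ^ p + n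
      ≤ 8 * C * M * ((8 * C + 4) * (M : ℝ) ^ p) + (8 * C * M + 1) := by gcongr
    _ ≤ D * M ^ p * M := by nlinarith
    _ ≤ M * M := by gcongr

/-- Corollary 1 of the paper: for `p ∈ (0,1)` and `C > 0` there is no
family of bandit strategies (one for each horizon `T` and arm count `K`) whose regret is
at most `C·√((K−1)·T)·log^p(1/δ)` with probability at least `1 − δ`, simultaneously for
all `T`, `K`, all loss sequences in `[0,1]^{KT}` and all `δ ∈ (0,1)`. -/
theorem no_polylog_high_prob_strategy {p C : ℝ} (hp : p ∈ Set.Ioo (0:ℝ) 1) (hC : 0 < C) :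
    ¬ ∃ (Ω : ℕ → ℕ → Type) (m : ∀ T K : ℕ, MeasurableSpace (Ω T K))
        (S : ∀ T K : ℕ, @Strategy K (Ω T K) (m T K)),
      ∀ (T K : ℕ), 1 ≤ T → 2 ≤ K →
        ∀ ℓ : ℕ → Fin K → ℝ, (∀ t < T, ∀ i, ℓ t i ∈ Set.Icc (0:ℝ) 1) →
        ∀ δ ∈ Set.Ioo (0:ℝ) 1,
          (S T K).μ {ω | @regret K (Ω T K) (m T K) (S T K) T ℓ ω ≥
              C * Real.sqrt (((K : ℝ) - 1) * T) * Real.log (1 / δ) ^ p}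
            ≤ ENNReal.ofReal δ := by
  rintro ⟨Ω, m, S, H⟩
  obtain ⟨T, n, hT, hn, hbudget⟩ := exists_horizon hp.1.le hp.2 hC
  let := m T 2
  have H2 := fun A => H T 2 hT le_rfl (twoArmLoss A) fun t _ => twoArmLoss_mem_Icc A t
  simp only [Nat.cast_ofNat, show (2 : ℝ) - 1 = 1 by norm_num, one_mul, Set.mem_Ioo,
    ge_iff_le] at H2
  have h0 : (S T 2).μ {ω | (n : ℝ) / 8 < regret (S T 2) T (twoArmLoss ∅) ω} ≤ 2⁻¹ := by
    refine (measure_mono fun ω hω => ?_).trans ((H2 ∅ 2⁻¹ (by norm_num)).trans_eq ?_)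
    · have hlog : log 2 ^ p ≤ 1 :=
        rpow_le_one (log_nonneg one_le_two) (log_two_lt_d9.trans (by norm_num)).le hp.1.le
      have : C * √T * log 2 ^ p ≤ C * √T := mul_le_of_le_one_right (by positivity) hlog
      simp only [one_div, inv_inv, Set.mem_ofPred_eq] at hω ⊢
      linarith
    · rw [ENNReal.ofReal_inv_of_pos two_pos, ENNReal.ofReal_ofNat]
  obtain ⟨A, hA⟩ := exists_measure_le_regret_twoArmLoss (S T 2) T n h0
  have h1 := hA.trans ((measure_mono fun ω hω => ?_).trans (H2 A ((2 ^ (n + 3))⁻¹)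
    ⟨by positivity, inv_lt_one_of_one_lt₀ (one_lt_pow₀ one_lt_two (by omega))⟩))
  · rw [ENNReal.ofReal_inv_of_pos (by positivity), ENNReal.ofReal_pow zero_le_two,
      ENNReal.ofReal_ofNat, ENNReal.inv_le_inv] at h1
    have : 2 ^ (n + 3) ≤ 2 ^ (n + 2) := by exact_mod_cast h1
    exact absurd ((Nat.pow_le_pow_iff_right one_lt_two).1 this) (by omega)
  · simp only [one_div, inv_inv, log_pow, Set.mem_ofPred_eq] at hω ⊢
    push_cast
    linarith

end BanditLB
end

section
/- Let P and Q be two probability measures on the same measurable space. Then for every measurable subset A (whose complement is denoted A^c), P(A) + Q(A^c) ≥ (1/2)·exp(−KL(P, Q)), where KL denotes the Kullback–Leibler divergence. -/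
/-!
Write `ρ = ∫ √(dQ/dP) dP` for the Hellinger affinity. Since `√(dQ/dP) = exp (-llr P Q / 2)`
`P`-a.e., Jensen's inequality gives `exp (-KL(P, Q) / 2) ≤ ρ`. Splitting `ρ` over `A` and `Aᶜ`
and applying Cauchy–Schwarz on each piece gives `ρ ≤ √(P A) + √(Q Aᶜ)`, and
`(√a + √b)² ≤ 2 (a + b)` finishes.
-/

open MeasureTheory ProbabilityTheory Real
open scoped ENNReal NNReal Classical

namespace BanditLB

variable {K : ℕ} {Ω : Type*} [MeasurableSpace Ω]

/-- `exp(−x)` for `x : ℝ≥0∞`, with the convention `exp(−∞) = 0`. -/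
noncomputable def expNeg (x : ℝ≥0∞) : ℝ := if x = ⊤ then 0 else Real.exp (-x.toReal)

section Affinity

variable {α : Type*} [MeasurableSpace α] {μ ν : Measure α}

lemma integrable_sqrt_toReal_rnDeriv [IsFiniteMeasure μ] [IsFiniteMeasure ν] :
    Integrable (fun x ↦ √(ν.rnDeriv μ x).toReal) μ := by
  refine ((Measure.integrable_toReal_rnDeriv (μ := ν) (ν := μ)).add (integrable_const 1)).mono'
    (Measure.measurable_rnDeriv ν μ).ennreal_toReal.sqrt.aestronglyMeasurable
    (ae_of_all _ fun x ↦ ?_)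
  have ht : 0 ≤ (ν.rnDeriv μ x).toReal := ENNReal.toReal_nonneg
  rw [Real.norm_of_nonneg (Real.sqrt_nonneg _), Pi.add_apply]
  nlinarith [Real.sq_sqrt ht, Real.sqrt_nonneg (ν.rnDeriv μ x).toReal]

/-- Cauchy–Schwarz for `√(dν/dμ) · 1` on `s`. -/
lemma setIntegral_sqrt_toReal_rnDeriv_le [IsFiniteMeasure μ] [IsFiniteMeasure ν] (s : Set α) :
    ∫ x in s, √(ν.rnDeriv μ x).toReal ∂μ ≤ √(μ.real s) * √(ν.real s) := by
  have h_sq (x : α) : √(ν.rnDeriv μ x).toReal ^ (2 : ℝ) = (ν.rnDeriv μ x).toReal := by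
    rw [Real.rpow_two, Real.sq_sqrt ENNReal.toReal_nonneg]
  have h_memLp : MemLp (fun x ↦ √(ν.rnDeriv μ x).toReal) (ENNReal.ofReal 2) (μ.restrict s) := by
    rw [ENNReal.ofReal_ofNat, memLp_two_iff_integrable_sq
      (Measure.measurable_rnDeriv ν μ).ennreal_toReal.sqrt.aestronglyMeasurable]
    simpa only [Real.sq_sqrt ENNReal.toReal_nonneg]
      using (Measure.integrable_toReal_rnDeriv (μ := ν) (ν := μ)).restrict
  have holder := integral_mul_le_Lp_mul_Lq_of_nonneg Real.HolderConjugate.two_two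
    (ae_of_all _ fun x ↦ Real.sqrt_nonneg _) (ae_of_all _ fun _ ↦ zero_le_one) h_memLp
    (by simpa using memLp_const (1 : ℝ))
  simp only [mul_one, Real.one_rpow, h_sq, setIntegral_const, smul_eq_mul] at holder
  calc ∫ x in s, √(ν.rnDeriv μ x).toReal ∂μ
      ≤ (∫ x in s, (ν.rnDeriv μ x).toReal ∂μ) ^ (1 / 2 : ℝ) * μ.real s ^ (1 / 2 : ℝ) := holder
    _ ≤ ν.real s ^ (1 / 2 : ℝ) * μ.real s ^ (1 / 2 : ℝ) := by
      gcongr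
      exact Measure.setIntegral_toReal_rnDeriv_le (measure_ne_top ν s)
    _ = √(μ.real s) * √(ν.real s) := by rw [Real.sqrt_eq_rpow, Real.sqrt_eq_rpow, mul_comm]

lemma integral_sqrt_toReal_rnDeriv_le [IsProbabilityMeasure μ] [IsProbabilityMeasure ν]
    {s : Set α} (hs : MeasurableSet s) :
    ∫ x, √(ν.rnDeriv μ x).toReal ∂μ ≤ √(μ.real s) + √(ν.real sᶜ) := by
  rw [← integral_add_compl hs integrable_sqrt_toReal_rnDeriv]
  gcongr
  · calc _ ≤ √(μ.real s) * √(ν.real s) := setIntegral_sqrt_toReal_rnDeriv_le s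
      _ ≤ √(μ.real s) * 1 := by gcongr; exact Real.sqrt_le_one.2 measureReal_le_one
      _ = √(μ.real s) := mul_one _
  · calc _ ≤ √(μ.real sᶜ) * √(ν.real sᶜ) := setIntegral_sqrt_toReal_rnDeriv_le sᶜ
      _ ≤ 1 * √(ν.real sᶜ) := by gcongr; exact Real.sqrt_le_one.2 measureReal_le_one
      _ = √(ν.real sᶜ) := one_mul _

/-- Jensen's inequality for `exp`, using `exp (-llr μ ν / 2) = √(dν/dμ)` `μ`-a.e. -/
lemma exp_neg_integral_llr_div_two_le [IsProbabilityMeasure μ] [IsFiniteMeasure ν]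
    (hμν : μ ≪ ν) (h_int : Integrable (llr μ ν) μ) :
    exp (-(∫ x, llr μ ν x ∂μ) / 2) ≤ ∫ x, √(ν.rnDeriv μ x).toReal ∂μ := by
  have h_ae : (fun x ↦ exp (-llr μ ν x / 2)) =ᵐ[μ] fun x ↦ √(ν.rnDeriv μ x).toReal := by
    filter_upwards [exp_neg_llr hμν] with x hx
    rw [← hx, Real.exp_half]
  calc exp (-(∫ x, llr μ ν x ∂μ) / 2) = exp (∫ x, -llr μ ν x / 2 ∂μ) := by
        rw [integral_div, integral_neg]
    _ ≤ ∫ x, exp (-llr μ ν x / 2) ∂μ :=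
      convexOn_exp.map_integral_le continuous_exp.continuousOn isClosed_univ
        (ae_of_all _ fun _ ↦ trivial) (h_int.neg.div_const 2)
        (integrable_sqrt_toReal_rnDeriv.congr h_ae.symm)
    _ = ∫ x, √(ν.rnDeriv μ x).toReal ∂μ := integral_congr_ae h_ae

lemma exp_neg_integral_llr_le [IsProbabilityMeasure μ] [IsProbabilityMeasure ν]
    (hμν : μ ≪ ν) (h_int : Integrable (llr μ ν) μ) {s : Set α} (hs : MeasurableSet s) :
    exp (-∫ x, llr μ ν x ∂μ) ≤ 2 * (μ.real s + ν.real sᶜ) := by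
  have h_aff := (exp_neg_integral_llr_div_two_le hμν h_int).trans
    (integral_sqrt_toReal_rnDeriv_le (ν := ν) hs)
  calc exp (-∫ x, llr μ ν x ∂μ) = exp (-(∫ x, llr μ ν x ∂μ) / 2) ^ 2 := by
        rw [← exp_nat_mul]; ring_nf
    _ ≤ (√(μ.real s) + √(ν.real sᶜ)) ^ 2 := by gcongr
    _ ≤ 2 * (√(μ.real s) ^ 2 + √(ν.real sᶜ) ^ 2) := add_sq_le
    _ = 2 * (μ.real s + ν.real sᶜ) := by
      rw [Real.sq_sqrt measureReal_nonneg, Real.sq_sqrt measureReal_nonneg]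

end Affinity

lemma expNeg_ofReal_le (r : ℝ) : expNeg (ENNReal.ofReal r) ≤ exp (-r) := by
  rw [expNeg, if_neg ENNReal.ofReal_ne_top, ENNReal.toReal_ofReal']
  gcongr
  exact le_max_left r 0

/-- Lemma 2, Tsybakov: for probability measures `P, Q` and any
measurable set `A`, `P(A) + Q(Aᶜ) ≥ (1/2)·exp(−KL(P,Q))`. -/
theorem tsybakov_lower_bound {α : Type*} [MeasurableSpace α]
    (P Q : Measure α) [IsProbabilityMeasure P] [IsProbabilityMeasure Q]
    {A : Set α} (hA : MeasurableSet A) :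
    (P A).toReal + (Q Aᶜ).toReal ≥ (1/2) * expNeg (klDiv P Q) := by
  by_cases h : P ≪ Q ∧ Integrable (llr P Q) P
  · rw [klDiv, if_pos h]
    have h_bound := (expNeg_ofReal_le _).trans (exp_neg_integral_llr_le h.1 h.2 hA)
    simp only [measureReal_def] at h_bound
    linarith
  · rw [klDiv, if_neg h, expNeg, if_pos rfl, mul_zero]
    positivity

end BanditLB
end

section
/- Consider the correlated clipped-Gaussian bandit environments with parameter Δ, and fix an arm i ∈ {1,…,K}. Let δ ∈ (0,1) and suppose Δ ≤ 1/30 and T ≥ 32·log(2/δ). Then for any randomised K-armed bandit strategy: (a) ℚ_i( R_T(ℓ^i_{1:T}) ≥ Δ·T/4 ) ≥ ℚ_i( N_i(T) ≤ T/2 ) − δ/2, and (b) E_{ℚ_i}[ R_T(ℓ^i_{1:T}) ] ≥ (7Δ/8)·E_{ℚ_i}[ T − N_i(T) ]. -/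
open MeasureTheory ProbabilityTheory Real
open scoped ENNReal NNReal Classical

namespace BanditLB

variable {K : ℕ} {Ω : Type*} [MeasurableSpace Ω]

/-!
If the noise `z t` lies in `G = [1/15, 14/15]`, nothing is clipped in round `t` and every arm
other than `i` loses at least `Δ` more than arm `i`; in every round arm `i` has the smallest loss.
Hence `R_T ≥ Δ · #{t < T | I_t ≠ i, z t ∈ G}`, and Mills' ratio for the noise law
`Q = 𝒩(1/2, σ²)`, `σ² = 1/(32 log 2)`, gives `Q(Gᶜ) ≤ 1/8`.

(a) By Hoeffding, at least `T/4` rounds have `z t ∉ G` with probability at most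
`exp(-T/32) ≤ δ/2`; outside this event `N_i(T) ≤ T/2` leaves at least `T/4` rounds with
`I_t ≠ i` and `z t ∈ G`.

(b) `I_t` is a function of the internal randomness and of `z 0, …, z (t-1)`, hence independent of
`z t`: `P(I_t ≠ i, z t ∈ G) = Q(G) · P(I_t ≠ i) ≥ (7/8) P(I_t ≠ i)`. Summing over `t` gives the
bound in expectation.
-/

open Finset

lemma clip01_mem (x : ℝ) : clip01 x ∈ Set.Icc (0:ℝ) 1 :=
  ⟨le_min zero_le_one (le_max_left _ _), min_le_left _ _⟩

lemma clip01_mono : Monotone clip01 := fun _ _ h => min_le_min le_rfl (max_le_max le_rfl h)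

lemma clip01_of_mem {x : ℝ} (hx : x ∈ Set.Icc (0:ℝ) 1) : clip01 x = x := by
  rw [clip01, max_eq_right hx.1, min_eq_right hx.2]

lemma measurable_clip01 : Measurable clip01 :=
  measurable_const.min (measurable_const.max measurable_id)

section ClipEnvLoss

variable [NeZero K] {Δ : ℝ}

lemma measurable_clipEnvLoss (Δ : ℝ) (j : Fin K) : Measurable (clipEnvLoss (K := K) Δ j) := by
  refine measurable_pi_lambda _ fun t => measurable_pi_lambda _ fun a => ?_
  have hz : Measurable fun z : ℕ → ℝ => z t := measurable_pi_apply t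
  simp only [clipEnvLoss]
  split_ifs
  exacts [measurable_clip01.comp (hz.sub_const _), measurable_clip01.comp (hz.sub_const _),
    measurable_clip01.comp hz]

lemma clipEnvLoss_mem (Δ : ℝ) (i : Fin K) (z : ℕ → ℝ) (t : ℕ) (j : Fin K) :
    clipEnvLoss Δ i z t j ∈ Set.Icc (0:ℝ) 1 := by
  simp only [clipEnvLoss]
  split_ifs <;> exact clip01_mem _

lemma clipEnvLoss_congr {i : Fin K} {z z' : ℕ → ℝ} {t : ℕ} (h : z t = z' t) :
    clipEnvLoss Δ i z t = clipEnvLoss Δ i z' t := by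
  ext j
  simp only [clipEnvLoss, h]

lemma clipEnvLoss_self_le (hΔ : 0 ≤ Δ) (i : Fin K) (z : ℕ → ℝ) (t : ℕ) (j : Fin K) :
    clipEnvLoss Δ i z t i ≤ clipEnvLoss Δ i z t j := by
  simp only [clipEnvLoss]
  split_ifs <;> subst_vars <;> first | rfl | (apply clip01_mono; linarith) | simp_all

lemma clipEnvLoss_self_add_le (hΔ : 0 ≤ Δ) {i j : Fin K} (hj : j ≠ i) {z : ℕ → ℝ} {t : ℕ}
    (hz : z t ∈ Set.Icc (2 * Δ) 1) :
    clipEnvLoss Δ i z t i + Δ ≤ clipEnvLoss Δ i z t j := by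
  obtain ⟨h0, h1⟩ := hz
  have e0 : clip01 (z t) = z t := clip01_of_mem ⟨by linarith, h1⟩
  have e1 : clip01 (z t - Δ) = z t - Δ := clip01_of_mem ⟨by linarith, by linarith⟩
  have e2 : clip01 (z t - 2 * Δ) = z t - 2 * Δ := clip01_of_mem ⟨by linarith, by linarith⟩
  simp only [clipEnvLoss]
  split_ifs <;> subst_vars <;> simp_all <;> linarith

end ClipEnvLoss

namespace Strategy

variable (S : Strategy K Ω)

lemma act_eq_of_forall_lt_eq {ℓ ℓ' : ℕ → Fin K → ℝ} {t : ℕ} (h : ∀ s < t, ℓ s = ℓ' s)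
    (ω : Ω) : S.act ℓ t ω = S.act ℓ' t ω := by
  induction t using Nat.strong_induction_on with
  | _ t ih =>
    refine S.adapted ℓ ℓ' t ω fun s hs => ⟨?_, by rw [h s hs]⟩
    exact ih s hs (fun u hu => h u (hu.trans hs))

lemma measurable_act_comp {α : Type*} [MeasurableSpace α] {L : α → ℕ → Fin K → ℝ}
    (hL : Measurable L) (t : ℕ) : Measurable fun p : α × Ω => S.act (L p.1) t p.2 :=
  (S.meas_act t).comp ((hL.comp measurable_fst).prodMk measurable_snd)

end Strategy

lemma cast_sub_numPlays (S : Strategy K Ω) (ℓ : ℕ → Fin K → ℝ) (i : Fin K) (T : ℕ) (ω : Ω) :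
    (T : ℝ) - numPlays S ℓ i T ω = ∑ t ∈ range T, if S.act ℓ t ω ≠ i then 1 else 0 := by
  rw [sum_boole, numPlays, sub_eq_iff_eq_add', ← Nat.cast_add, card_filter_add_card_filter_not,
    card_range]

lemma numPlays_le (S : Strategy K Ω) (ℓ : ℕ → Fin K → ℝ) (i : Fin K) (T : ℕ) (ω : Ω) :
    numPlays S ℓ i T ω ≤ T :=
  (card_filter_le _ _).trans_eq (card_range T)

lemma measurable_regret (S : Strategy K Ω) (T : ℕ) :
    Measurable fun p : (ℕ → Fin K → ℝ) × Ω => regret S T p.1 p.2 := by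
  have hloss : ∀ t, Measurable fun p : (ℕ → Fin K → ℝ) × Ω => p.1 t :=
    fun t => (measurable_pi_apply t).comp measurable_fst
  have heval : Measurable fun q : (Fin K → ℝ) × Fin K => q.1 q.2 :=
    measurable_from_prod_countable_left fun j => measurable_pi_apply j
  refine (Finset.measurable_sum _ fun t _ => heval.comp ((hloss t).prodMk (S.meas_act t))).sub
    (Measurable.iInf fun j => Finset.measurable_sum _ fun t _ => ?_)
  exact (measurable_pi_apply j).comp (hloss t)

lemma measurable_numPlays (S : Strategy K Ω) (i : Fin K) (T : ℕ) :
    Measurable fun p : (ℕ → Fin K → ℝ) × Ω => (numPlays S p.1 i T p.2 : ℝ) := by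
  simp_rw [numPlays, card_filter]
  push_cast
  exact Finset.measurable_sum _ fun t _ =>
    Measurable.ite ((S.meas_act t) (measurableSet_singleton i)) measurable_const measurable_const

lemma regret_eq_sum_sub_of_forall_le [NeZero K] (S : Strategy K Ω) {ℓ : ℕ → Fin K → ℝ}
    {i : Fin K} (hi : ∀ t j, ℓ t i ≤ ℓ t j) (T : ℕ) (ω : Ω) :
    regret S T ℓ ω = ∑ t ∈ range T, (ℓ t (S.act ℓ t ω) - ℓ t i) := by
  have hmin : ⨅ j, ∑ t ∈ range T, ℓ t j = ∑ t ∈ range T, ℓ t i :=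
    le_antisymm (ciInf_le (Set.finite_range _).bddBelow i)
      (le_ciInf fun j => sum_le_sum fun t _ => hi t j)
  rw [regret, hmin, sum_sub_distrib]

section RegretClipEnv

variable [NeZero K] (S : Strategy K Ω) {Δ : ℝ} (i : Fin K) (z : ℕ → ℝ) (ω : Ω) (T : ℕ)

lemma abs_regret_clipEnvLoss_le (hΔ : 0 ≤ Δ) : |regret S T (clipEnvLoss Δ i z) ω| ≤ T := by
  rw [regret_eq_sum_sub_of_forall_le S (clipEnvLoss_self_le hΔ i z)]
  refine (abs_sum_le_sum_abs _ _).trans ((sum_le_sum (g := fun _ => (1:ℝ)) fun t _ => ?_).trans_eq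
    (by simp))
  set a := S.act (clipEnvLoss Δ i z) t ω
  rw [abs_le]
  constructor <;> linarith [(clipEnvLoss_mem Δ i z t a).2, (clipEnvLoss_mem Δ i z t i).1,
    clipEnvLoss_self_le hΔ i z t a]

lemma mul_sum_le_regret_clipEnvLoss (hΔ : 0 ≤ Δ) {G : Set ℝ} (hG : G ⊆ Set.Icc (2 * Δ) 1) :
    Δ * ∑ t ∈ range T, (if S.act (clipEnvLoss Δ i z) t ω ≠ i ∧ z t ∈ G then 1 else 0)
      ≤ regret S T (clipEnvLoss Δ i z) ω := by
  rw [regret_eq_sum_sub_of_forall_le S (clipEnvLoss_self_le hΔ i z), mul_sum]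
  refine sum_le_sum fun t _ => ?_
  split_ifs with h
  · linarith [clipEnvLoss_self_add_le hΔ h.1 (hG h.2)]
  · linarith [clipEnvLoss_self_le hΔ i z t (S.act (clipEnvLoss Δ i z) t ω)]

lemma mul_sub_le_regret_clipEnvLoss (hΔ : 0 ≤ Δ) {G : Set ℝ} (hG : G ⊆ Set.Icc (2 * Δ) 1) :
    Δ * ((T - numPlays S (clipEnvLoss Δ i z) i T ω) - ∑ t ∈ range T, Gᶜ.indicator 1 (z t))
      ≤ regret S T (clipEnvLoss Δ i z) ω := by
  refine le_trans (mul_le_mul_of_nonneg_left ?_ hΔ) (mul_sum_le_regret_clipEnvLoss S i z ω T hΔ hG)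
  rw [cast_sub_numPlays, ← sum_sub_distrib]
  refine sum_le_sum fun t _ => ?_
  simp only [Set.indicator_apply, Set.mem_compl_iff, Pi.one_apply]
  split_ifs <;> simp_all

end RegretClipEnv

namespace IsIIDSeq

variable {β : Type*} [MeasurableSpace β] {γ : Measure (ℕ → β)} {Q : Measure β}

lemma map_eval_restrict [IsProbabilityMeasure Q] (hγ : IsIIDSeq γ Q) (t : ℕ) :
    γ.map (fun z => (z t, fun s : Fin t => z s)) = Q.prod (Measure.pi fun _ : Fin t => Q) := by
  have hsplit : (fun z : ℕ → β => (z t, fun s : Fin t => z s))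
      = MeasurableEquiv.piFinSuccAbove (fun _ : Fin (t + 1) => β) (Fin.last t)
          ∘ fun z (s : Fin (t + 1)) => z s := by
    funext z
    simp only [Function.comp_apply, MeasurableEquiv.piFinSuccAbove, Fin.insertNthEquiv,
      MeasurableEquiv.coe_mk, Equiv.coe_fn_symm_mk]
    exact Prod.ext (by simp) (funext fun s => by simp [Fin.init])
  rw [hsplit, ← Measure.map_map (f := fun (z : ℕ → β) (s : Fin (t + 1)) => z s)
    (MeasurableEquiv.measurable _) (measurable_pi_lambda _ fun s => measurable_pi_apply _),
    hγ.2 (t + 1),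
    (measurePreserving_piFinSuccAbove (fun _ : Fin (t + 1) => Q) (Fin.last t)).map_eq]

lemma prod_eval_mem_inter [IsProbabilityMeasure Q] (hγ : IsIIDSeq γ Q) (μ : Measure Ω) [SFinite μ]
    (t : ℕ) {G : Set β} (hG : MeasurableSet G) {E : Set ((Fin t → β) × Ω)} (hE : MeasurableSet E) :
    γ.prod μ {p | ((fun s : Fin t => p.1 s), p.2) ∈ E ∧ p.1 t ∈ G}
      = Q G * γ.prod μ {p | ((fun s : Fin t => p.1 s), p.2) ∈ E} := by
  have := hγ.1
  set Φ : (ℕ → β) × Ω → β × ((Fin t → β) × Ω) := fun p => (p.1 t, ((fun s : Fin t => p.1 s), p.2))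
  have hrestrict : Measurable fun z : ℕ → β => (z t, fun s : Fin t => z s) :=
    (measurable_pi_apply t).prodMk (measurable_pi_lambda _ fun s => measurable_pi_apply _)
  have hΦ : Measurable Φ :=
    (measurable_pi_apply t).comp measurable_fst |>.prodMk
      (((measurable_pi_lambda _ fun s => measurable_pi_apply _).comp measurable_fst).prodMk
        measurable_snd)
  have hmap : (γ.prod μ).map Φ = Q.prod ((Measure.pi fun _ : Fin t => Q).prod μ) := by
    have hΦ_eq : Φ = MeasurableEquiv.prodAssoc
        ∘ Prod.map (fun z : ℕ → β => (z t, fun s : Fin t => z s)) id := rfl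
    rw [hΦ_eq, ← Measure.map_map (MeasurableEquiv.measurable _) (hrestrict.prodMap measurable_id),
      ← Measure.map_prod_map _ _ hrestrict measurable_id, Measure.map_id, hγ.map_eval_restrict,
      Measure.prodAssoc_prod]
  have h1 : {p : (ℕ → β) × Ω | ((fun s : Fin t => p.1 s), p.2) ∈ E ∧ p.1 t ∈ G}
      = Φ ⁻¹' (G ×ˢ E) := by
    ext p; simp [Φ, and_comm]
  have h2 : {p : (ℕ → β) × Ω | ((fun s : Fin t => p.1 s), p.2) ∈ E} = Φ ⁻¹' (Set.univ ×ˢ E) := by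
    ext p; simp [Φ]
  rw [h1, h2, ← Measure.map_apply hΦ (hG.prod hE),
    ← Measure.map_apply hΦ (MeasurableSet.univ.prod hE), hmap, Measure.prod_prod,
    Measure.prod_prod, measure_univ, one_mul]

lemma measureReal_le_sum_le [IsProbabilityMeasure Q] (hγ : IsIIDSeq γ Q) {f : β → ℝ}
    (hf : Measurable f) (hf01 : ∀ x, f x ∈ Set.Icc (0:ℝ) 1) (T : ℕ) {ε : ℝ} (hε : 0 ≤ ε) :
    γ.real {z | T * ∫ x, f x ∂Q + ε ≤ ∑ s ∈ range T, f (z s)} ≤ exp (-2 * ε ^ 2 / T) := by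
  set P := Measure.pi fun _ : Fin T => Q
  set c := ∫ x, f x ∂Q
  have hfs : ∀ s : Fin T, Measurable fun v : Fin T → β => f (v s) :=
    fun s => hf.comp (measurable_pi_apply s)
  have hsubG : ∀ s : Fin T,
      HasSubgaussianMGF (fun v : Fin T → β => f (v s) - c) ((‖(1:ℝ) - 0‖₊ / 2) ^ 2) P := by
    intro s
    have hmean : ∫ v, f (v s) ∂P = c := by
      rw [← integral_map (measurable_pi_apply s).aemeasurable hf.aestronglyMeasurable,
        (measurePreserving_eval (fun _ : Fin T => Q) s).map_eq]
    simpa only [hmean] using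
      hasSubgaussianMGF_of_mem_Icc (hfs s).aemeasurable (ae_of_all P fun v => hf01 (v s))
  have hindep : iIndepFun (fun (s : Fin T) (v : Fin T → β) => f (v s) - c) P :=
    iIndepFun_pi (X := fun _ x => f x - c) fun _ => (hf.sub_const c).aemeasurable
  have hHoeffding :=
    HasSubgaussianMGF.measure_sum_ge_le_of_iIndepFun hindep (s := univ) (fun s _ => hsubG s) hε
  have hpre : {z : ℕ → β | T * c + ε ≤ ∑ s ∈ range T, f (z s)}
      = (fun z (s : Fin T) => z s) ⁻¹' {v | ε ≤ ∑ s, (f (v s) - c)} := by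
    ext z
    simp only [Set.mem_ofPred_eq, Set.mem_preimage, sum_sub_distrib, sum_const, card_univ,
      Fintype.card_fin, nsmul_eq_mul, Fin.sum_univ_eq_sum_range (fun s => f (z s))]
    constructor <;> intro h <;> linarith
  rw [hpre, measureReal_def,
    ← Measure.map_apply (measurable_pi_lambda _ fun s => measurable_pi_apply _)
    (measurableSet_le measurable_const (Finset.measurable_sum _ fun s _ => (hfs s).sub_const c)),
    hγ.2 T, ← measureReal_def]
  refine hHoeffding.trans_eq (congrArg exp ?_)
  simp only [sum_const, card_univ, Fintype.card_fin, nsmul_eq_mul]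
  norm_num
  ring

end IsIIDSeq

lemma Strategy.prod_act_mem_inter_eval_mem (S : Strategy K Ω) {γ : Measure (ℕ → ℝ)}
    {Q : Measure ℝ} [IsProbabilityMeasure Q] (hγ : IsIIDSeq γ Q)
    {L : (ℕ → ℝ) → ℕ → Fin K → ℝ} (hL : Measurable L)
    (hcausal : ∀ z z' t, z t = z' t → L z t = L z' t) (t : ℕ) (A : Set (Fin K))
    {G : Set ℝ} (hG : MeasurableSet G) :
    γ.prod S.μ {p | S.act (L p.1) t p.2 ∈ A ∧ p.1 t ∈ G}
      = Q G * γ.prod S.μ {p | S.act (L p.1) t p.2 ∈ A} := by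
  have := S.prob
  -- The action at round `t` factors through the first `t` noise values, re-extended by zeros.
  set extend : (Fin t → ℝ) → ℕ → ℝ := fun v s => if h : s < t then v ⟨s, h⟩ else 0
  have hextend : Measurable extend := measurable_pi_lambda _ fun s => by
    by_cases h : s < t
    · simpa only [extend, dif_pos h] using measurable_pi_apply _
    · simpa only [extend, dif_neg h] using measurable_const
  have hpast : ∀ z ω, S.act (L z) t ω = S.act (L (extend fun s : Fin t => z s)) t ω :=
    fun z ω => S.act_eq_of_forall_lt_eq (fun s hs => hcausal _ _ s (by simp [extend, hs])) ω
  set E := {q : (Fin t → ℝ) × Ω | S.act (L (extend q.1)) t q.2 ∈ A}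
  have hE : MeasurableSet E :=
    S.measurable_act_comp (hL.comp hextend) t (MeasurableSet.of_discrete (s := A))
  have h1 : {p : (ℕ → ℝ) × Ω | S.act (L p.1) t p.2 ∈ A ∧ p.1 t ∈ G}
      = {p | ((fun s : Fin t => p.1 s), p.2) ∈ E ∧ p.1 t ∈ G} :=
    Set.ext fun p => by rw [Set.mem_ofPred_eq, hpast]; rfl
  have h2 : {p : (ℕ → ℝ) × Ω | S.act (L p.1) t p.2 ∈ A}
      = {p | ((fun s : Fin t => p.1 s), p.2) ∈ E} :=
    Set.ext fun p => by rw [Set.mem_ofPred_eq, hpast]; rfl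
  rw [h1, h2, hγ.prod_eval_mem_inter S.μ t hG hE]

section GaussianTail

open Filter

variable (m : ℝ) {v : ℝ≥0}

lemma hasDerivAt_gaussianPDFReal (x : ℝ) :
    HasDerivAt (gaussianPDFReal m v) (-((x - m) / v) * gaussianPDFReal m v x) x := by
  have hexponent : HasDerivAt (fun y => -(y - m) ^ 2 / (2 * v)) (-(2 * (x - m)) / (2 * v)) x := by
    simpa using (((hasDerivAt_id x).sub_const m).fun_pow 2).neg.div_const (2 * (v : ℝ))
  refine (hexponent.exp.const_mul (√(2 * π * v))⁻¹).congr_deriv ?_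
  rw [gaussianPDFReal]
  rcases eq_or_ne (v : ℝ) 0 with hv | hv
  · simp [hv]
  · field_simp

lemma tendsto_gaussianPDFReal_atTop : Tendsto (gaussianPDFReal m v) atTop (nhds 0) := by
  rcases eq_or_ne v 0 with rfl | hv
  · rw [gaussianPDFReal_zero_var]
    exact tendsto_const_nhds
  have hsq : Tendsto (fun x => (x - m) ^ 2) atTop atTop :=
    (tendsto_pow_atTop two_ne_zero).comp (tendsto_atTop_add_const_right _ (-m) tendsto_id)
  have hexp := tendsto_exp_atBot.comp
    ((tendsto_neg_atTop_atBot.comp hsq).atBot_div_const (by positivity : (0:ℝ) < 2 * v))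
  simpa [gaussianPDFReal_def] using hexp.const_mul (√(2 * π * v))⁻¹

/-- Mills' ratio bound: on the tail `1 ≤ (x - m) / a`, and `(x - m) / v * pdf x = -pdf' x`. -/
lemma gaussianReal_real_Ici_le (hv : v ≠ 0) {a : ℝ} (ha : 0 < a) :
    (gaussianReal m v).real (Set.Ici (m + a)) ≤ v / a * gaussianPDFReal m v (m + a) := by
  set g : ℝ → ℝ := fun x => -(v / a * gaussianPDFReal m v x)
  set g' : ℝ → ℝ := fun x => (x - m) / a * gaussianPDFReal m v x
  have hg : ∀ x ∈ Set.Ici (m + a), HasDerivAt g (g' x) x := fun x _ => by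
    refine ((hasDerivAt_gaussianPDFReal m x).const_mul (v / a : ℝ)).neg.congr_deriv ?_
    have : (v : ℝ) ≠ 0 := by exact_mod_cast hv
    simp only [g']
    field_simp
  have hg'_nonneg : ∀ x ∈ Set.Ioi (m + a), 0 ≤ g' x := fun x hx =>
    mul_nonneg (div_nonneg (by linarith [hx.out]) ha.le) (gaussianPDFReal_nonneg m v x)
  have hlim : Tendsto g atTop (nhds 0) := by
    simpa [g] using ((tendsto_gaussianPDFReal_atTop m).const_mul (v / a : ℝ)).neg
  rw [measureReal_def, gaussianReal_apply_eq_integral m hv, ENNReal.toReal_ofReal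
    (setIntegral_nonneg measurableSet_Ici fun x _ => gaussianPDFReal_nonneg m v x),
    integral_Ici_eq_integral_Ioi]
  calc ∫ x in Set.Ioi (m + a), gaussianPDFReal m v x
      ≤ ∫ x in Set.Ioi (m + a), g' x := by
        refine setIntegral_mono_on (integrable_gaussianPDFReal m v).integrableOn
          (integrableOn_Ioi_deriv_of_nonneg' hg hg'_nonneg hlim) measurableSet_Ioi fun x hx => ?_
        have : 1 ≤ (x - m) / a := (one_le_div ha).2 (by linarith [hx.out])
        nlinarith [gaussianPDFReal_nonneg m v x]
    _ = v / a * gaussianPDFReal m v (m + a) := by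
        rw [integral_Ioi_of_hasDerivAt_of_nonneg' hg hg'_nonneg hlim]
        simp [g]

lemma gaussianReal_real_Iic_le (hv : v ≠ 0) {a : ℝ} (ha : 0 < a) :
    (gaussianReal m v).real (Set.Iic (m - a)) ≤ v / a * gaussianPDFReal m v (m + a) := by
  have hsymm : (gaussianReal m v).map (2 * m - ·) = gaussianReal m v := by
    rw [gaussianReal_map_const_sub]; ring_nf
  have hpre : (2 * m - ·) ⁻¹' Set.Ici (m + a) = Set.Iic (m - a) := by
    ext x
    simp only [Set.mem_preimage, Set.mem_Ici, Set.mem_Iic]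
    constructor <;> intro <;> linarith
  rw [← hpre, ← map_measureReal_apply (by fun_prop) measurableSet_Ici, hsymm]
  exact gaussianReal_real_Ici_le m hv ha

lemma gaussianReal_real_compl_Icc_le (hv : v ≠ 0) {a : ℝ} (ha : 0 < a) :
    (gaussianReal m v).real (Set.Icc (m - a) (m + a))ᶜ
      ≤ 2 * (v / a * gaussianPDFReal m v (m + a)) := by
  have hcover : (Set.Icc (m - a) (m + a))ᶜ ⊆ Set.Iic (m - a) ∪ Set.Ici (m + a) := by
    intro x hx
    simp only [Set.mem_compl_iff, Set.mem_Icc, not_and_or, not_le] at hx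
    exact hx.imp (fun h => h.le) (fun h => h.le)
  calc _ ≤ (gaussianReal m v).real (Set.Iic (m - a) ∪ Set.Ici (m + a)) := measureReal_mono hcover
    _ ≤ _ := (measureReal_union_le _ _).trans
        (by linarith [gaussianReal_real_Iic_le m hv ha, gaussianReal_real_Ici_le m hv ha])

end GaussianTail

lemma sigSq_pos : 0 < sigSq := by
  have := log_pos one_lt_two
  rw [sigSq]; positivity

lemma gaussianReal_sigSq_real_compl_Icc_le :
    (gaussianReal (1/2) sigSq.toNNReal).real (Set.Icc (1/15) (14/15))ᶜ ≤ 1/8 := by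
  have hv : sigSq.toNNReal ≠ 0 := by simpa using sigSq_pos
  have hpos := sigSq_pos
  have hsig : sigSq * (32 * log 2) = 1 := by rw [sigSq]; field_simp
  have hlog2 := log_two_gt_d9
  have hIcc : Set.Icc (1/15 : ℝ) (14/15) = Set.Icc (1/2 - 13/30) (1/2 + 13/30) := by norm_num
  rw [hIcc]
  refine (gaussianReal_real_compl_Icc_le (1/2) hv (by norm_num : (0:ℝ) < 13/30)).trans ?_
  rw [gaussianPDFReal, coe_toNNReal _ hpos.le, add_sub_cancel_left]
  have hsqrt : 60/13 * sigSq ≤ √(2 * π * sigSq) :=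
    le_sqrt_of_sq_le (by nlinarith [pi_gt_three])
  have hratio : sigSq / (13/30) * (√(2 * π * sigSq))⁻¹ ≤ 1/2 := by
    rw [← div_eq_mul_inv, div_le_iff₀ (by positivity)]
    linarith
  -- `(13/30)² / (2σ²) = (169/900) · 16 log 2 > 3 log 2`
  have hexp : exp (-(13/30) ^ 2 / (2 * sigSq)) ≤ 1/8 := by
    calc exp (-(13/30) ^ 2 / (2 * sigSq)) ≤ exp (-(3 * log 2)) :=
          exp_le_exp.2 (by rw [div_le_iff₀ (by positivity)]; nlinarith)
      _ = 1/8 := by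
          rw [exp_neg, show (3 : ℝ) = (3 : ℕ) by norm_num, exp_nat_mul, exp_log two_pos]
          norm_num
  calc 2 * (sigSq / (13/30) * ((√(2 * π * sigSq))⁻¹ * exp (-(13/30) ^ 2 / (2 * sigSq))))
      = 2 * (sigSq / (13/30) * (√(2 * π * sigSq))⁻¹ * exp (-(13/30) ^ 2 / (2 * sigSq))) := by
        ring
    _ ≤ 2 * (1/2 * (1/8)) := by gcongr
    _ = 1/8 := by norm_num

lemma joint_map (S : Strategy K Ω) {α : Type*} [MeasurableSpace α] (γ : Measure α) [SFinite γ]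
    {L : α → ℕ → Fin K → ℝ} (hL : Measurable L) :
    joint S (γ.map L) = (γ.prod S.μ).map (Prod.map L id) := by
  have := S.prob
  rw [joint, ← Measure.map_prod_map _ _ hL measurable_id, Measure.map_id]

lemma integral_sum_boole {α ι : Type*} [MeasurableSpace α] (ν : Measure α) [IsFiniteMeasure ν]
    (s : Finset ι) {P : ι → α → Prop} [∀ t, DecidablePred (P t)]
    (hP : ∀ t, MeasurableSet {a | P t a}) :
    ∫ a, ∑ t ∈ s, (if P t a then (1:ℝ) else 0) ∂ν = ∑ t ∈ s, ν.real {a | P t a} := by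
  have hind : ∀ t a, (if P t a then (1:ℝ) else 0) = {a | P t a}.indicator (fun _ => 1) a :=
    fun t a => by simp [Set.indicator_apply]
  simp_rw [hind]
  rw [integral_finsetSum _ fun t _ => (integrable_const (1:ℝ)).indicator (hP t)]
  exact sum_congr rfl fun t _ => integral_indicator_one (hP t)

section JointClipEnv

variable [NeZero K] (S : Strategy K Ω) {Δ : ℝ} (i : Fin K) {γ : Measure (ℕ → ℝ)}
  {Q : Measure ℝ} {G : Set ℝ} (T : ℕ)

lemma joint_clipEnv_real_numPlays_le_half_le [IsProbabilityMeasure Q] (hγ : IsIIDSeq γ Q)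
    (hΔ : 0 ≤ Δ) (hGm : MeasurableSet G) (hG : G ⊆ Set.Icc (2 * Δ) 1) (hQG : Q.real Gᶜ ≤ 1/8) :
    (joint S (clipEnv Δ i γ)).real {pr | (numPlays S pr.1 i T pr.2 : ℝ) ≤ T / 2}
      ≤ (joint S (clipEnv Δ i γ)).real {pr | regret S T pr.1 pr.2 ≥ Δ * T / 4}
        + exp (-T / 32) := by
  have := hγ.1
  have := S.prob
  set L := clipEnvLoss (K := K) Δ i
  have hL : Measurable L := measurable_clipEnvLoss Δ i
  -- At least `T / 4` bad rounds is a deviation of `T / 8` above the mean `T * Q.real Gᶜ ≤ T / 8`.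
  set bad : Set (ℕ → ℝ) :=
    {z | T * ∫ x, Gᶜ.indicator (1 : ℝ → ℝ) x ∂Q + T / 8 ≤ ∑ s ∈ range T, Gᶜ.indicator 1 (z s)}
  have hbad : γ.real bad ≤ exp (-T / 32) := by
    refine (hγ.measureReal_le_sum_le (measurable_one.indicator hGm.compl)
      (fun x => ?_) T (ε := T / 8) (by positivity)).trans_eq (congrArg exp ?_)
    · by_cases hx : x ∈ Gᶜ <;> simp [hx]
    · rcases Nat.eq_zero_or_pos T with rfl | hT
      · simp
      · field_simp; ring
  have hcover : {p : (ℕ → ℝ) × Ω | (numPlays S (L p.1) i T p.2 : ℝ) ≤ T / 2}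
      ⊆ {p | regret S T (L p.1) p.2 ≥ Δ * T / 4} ∪ bad ×ˢ Set.univ := by
    rintro ⟨z, ω⟩ hN
    by_cases hz : z ∈ bad
    · exact Or.inr ⟨hz, trivial⟩
    refine Or.inl (le_trans ?_ (mul_sub_le_regret_clipEnvLoss S i z ω T hΔ hG))
    have : ∫ x, Gᶜ.indicator (1 : ℝ → ℝ) x ∂Q = Q.real Gᶜ := integral_indicator_one hGm.compl
    simp only [bad, Set.mem_ofPred_eq, not_le] at hz hN
    rw [this] at hz
    have : (T : ℝ) * Q.real Gᶜ ≤ T / 8 := by nlinarith [(Nat.cast_nonneg T : (0:ℝ) ≤ T)]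
    rw [mul_div_assoc]
    exact mul_le_mul_of_nonneg_left (by linarith) hΔ
  rw [clipEnv, joint_map S γ hL,
    map_measureReal_apply (hL.prodMap measurable_id)
      (measurableSet_le (measurable_numPlays S i T) measurable_const),
    map_measureReal_apply (hL.prodMap measurable_id)
      (measurableSet_le measurable_const (measurable_regret S T))]
  calc _ ≤ (γ.prod S.μ).real ({p | regret S T (L p.1) p.2 ≥ Δ * T / 4} ∪ bad ×ˢ Set.univ) :=
        measureReal_mono hcover (measure_ne_top _ _)
    _ ≤ _ := by
        refine (measureReal_union_le _ _).trans (add_le_add le_rfl ?_)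
        rw [measureReal_prod_prod, probReal_univ, mul_one]
        exact hbad

lemma mul_integral_sub_numPlays_le_integral_regret [IsProbabilityMeasure Q] (hγ : IsIIDSeq γ Q)
    (hΔ : 0 ≤ Δ) (hGm : MeasurableSet G) (hG : G ⊆ Set.Icc (2 * Δ) 1) :
    Δ * Q.real G * ∫ pr, ((T : ℝ) - numPlays S pr.1 i T pr.2) ∂(joint S (clipEnv Δ i γ))
      ≤ ∫ pr, regret S T pr.1 pr.2 ∂(joint S (clipEnv Δ i γ)) := by
  have := hγ.1
  have := S.prob
  set L := clipEnvLoss (K := K) Δ i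
  set ν := γ.prod S.μ
  have hL : Measurable L := measurable_clipEnvLoss Δ i
  have hplayed : ∀ t, MeasurableSet {p : (ℕ → ℝ) × Ω | S.act (L p.1) t p.2 ≠ i} :=
    fun t => S.measurable_act_comp hL t (measurableSet_singleton i).compl
  have hgood : ∀ t, MeasurableSet {p : (ℕ → ℝ) × Ω | S.act (L p.1) t p.2 ≠ i ∧ p.1 t ∈ G} :=
    fun t => (hplayed t).inter ((measurable_pi_apply t).comp measurable_fst hGm)
  have hsplit : ∀ t, ν.real {p | S.act (L p.1) t p.2 ≠ i ∧ p.1 t ∈ G}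
      = Q.real G * ν.real {p | S.act (L p.1) t p.2 ≠ i} := fun t => by
    have h := S.prod_act_mem_inter_eval_mem hγ hL
      (fun _ _ _ => clipEnvLoss_congr) t {i}ᶜ hGm
    simpa only [measureReal_def, ENNReal.toReal_mul, Set.mem_compl_singleton_iff]
      using congrArg ENNReal.toReal h
  have hregret : Integrable (fun p : (ℕ → ℝ) × Ω => regret S T (L p.1) p.2) ν :=
    .of_bound ((measurable_regret S T).comp (hL.prodMap measurable_id)).aestronglyMeasurable T
      (ae_of_all _ fun p => abs_regret_clipEnvLoss_le S i p.1 p.2 T hΔ)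
  rw [clipEnv, joint_map S γ hL,
    integral_map (hL.prodMap measurable_id).aemeasurable
      (measurable_regret S T).aestronglyMeasurable,
    integral_map (hL.prodMap measurable_id).aemeasurable
      (f := fun pr => (T : ℝ) - numPlays S pr.1 i T pr.2)
      (measurable_const.sub (measurable_numPlays S i T)).aestronglyMeasurable]
  simp only [Prod.map_fst, Prod.map_snd, id, cast_sub_numPlays]
  calc Δ * Q.real G * ∫ p, ∑ t ∈ range T, (if S.act (L p.1) t p.2 ≠ i then 1 else 0) ∂ν
      = ∫ p, Δ * ∑ t ∈ range T, (if S.act (L p.1) t p.2 ≠ i ∧ p.1 t ∈ G then 1 else 0) ∂ν := by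
        rw [integral_const_mul, integral_sum_boole ν _ hgood, integral_sum_boole ν _ hplayed,
          mul_assoc, mul_sum]
        simp_rw [hsplit]
    _ ≤ ∫ p, regret S T (L p.1) p.2 ∂ν :=
        integral_mono_of_nonneg (ae_of_all _ fun p => mul_nonneg hΔ (sum_nonneg fun t _ => by
          split_ifs <;> norm_num)) hregret
          (ae_of_all _ fun p => mul_sum_le_regret_clipEnvLoss S i p.1 p.2 T hΔ hG)

end JointClipEnv

theorem clipped_gaussian_environment_regret_general
    {K T : ℕ} [NeZero K]
    {Ω : Type*} [MeasurableSpace Ω] (S : Strategy K Ω)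
    {Δ δ : ℝ} (hΔ : Δ ∈ Set.Icc (0:ℝ) (1/30)) (hδ : δ ∈ Set.Ioo (0:ℝ) 1)
    (hT : (T : ℝ) ≥ 32 * Real.log (2 / δ))
    (i : Fin K)
    (γ : Measure (ℕ → ℝ)) (hγ : IsIIDSeq γ (gaussianReal (1/2) (Real.toNNReal sigSq))) :
    ((joint S (clipEnv Δ i γ)) {pr | regret S T pr.1 pr.2 ≥ Δ * T / 4}).toReal ≥
        ((joint S (clipEnv Δ i γ))
            {pr | (numPlays S pr.1 i T pr.2 : ℝ) ≤ (T : ℝ) / 2}).toReal - δ / 2 ∧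
      ∫ pr, regret S T pr.1 pr.2 ∂(joint S (clipEnv Δ i γ)) ≥
        (7 * Δ / 8) *
          ∫ pr, ((T : ℝ) - numPlays S pr.1 i T pr.2) ∂(joint S (clipEnv Δ i γ)) := by
  obtain ⟨hΔ0, hΔ1⟩ := hΔ
  have hG : Set.Icc (1/15 : ℝ) (14/15) ⊆ Set.Icc (2 * Δ) 1 :=
    Set.Icc_subset_Icc (by linarith) (by norm_num)
  have hbad := gaussianReal_sigSq_real_compl_Icc_le
  constructor
  · have hexp : exp (-T / 32) ≤ δ / 2 := by
      have hlog : log (2 / δ) = -log (δ / 2) := by rw [← inv_div, log_inv]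
      calc exp (-T / 32) ≤ exp (log (δ / 2)) := exp_le_exp.2 (by linarith)
        _ = δ / 2 := exp_log (half_pos hδ.1)
    have h := joint_clipEnv_real_numPlays_le_half_le S i T hγ hΔ0 measurableSet_Icc hG hbad
    simp only [measureReal_def] at h
    linarith
  · have hgood :
        7/8 ≤ (gaussianReal (1/2) sigSq.toNNReal).real (Set.Icc (1/15 : ℝ) (14/15)) := by
      rw [measureReal_compl measurableSet_Icc, probReal_univ] at hbad
      linarith
    have h := mul_integral_sub_numPlays_le_integral_regret S i T hγ hΔ0 measurableSet_Icc hG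
    have hN : 0 ≤ ∫ pr, ((T : ℝ) - numPlays S pr.1 i T pr.2) ∂(joint S (clipEnv Δ i γ)) :=
      integral_nonneg fun pr => sub_nonneg.2 (Nat.cast_le.2 (numPlays_le S pr.1 i T pr.2))
    have := mul_le_mul_of_nonneg_right (mul_le_mul_of_nonneg_left hgood hΔ0) hN
    linarith

/-- Lemma 3 of the paper: in the correlated clipped-Gaussian
environment `ℚ_i` with gap parameter `Δ ≤ 1/30`, if `T ≥ 32·log(2/δ)` then
(a) `ℚ_i(R_T ≥ ΔT/4) ≥ ℚ_i(N_i(T) ≤ T/2) − δ/2`, and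
(b) `E_{ℚ_i}[R_T] ≥ (7Δ/8)·E_{ℚ_i}[T − N_i(T)]`.
(Arm `0` plays the role of the paper's arm `1`.) -/
theorem clipped_gaussian_environment_regret
    {K T : ℕ} (hK : 2 ≤ K) [NeZero K]
    {Ω : Type*} [MeasurableSpace Ω] (S : Strategy K Ω)
    {Δ δ : ℝ} (hΔ : Δ ∈ Set.Icc (0:ℝ) (1/30)) (hδ : δ ∈ Set.Ioo (0:ℝ) 1)
    (hT : (T : ℝ) ≥ 32 * Real.log (2 / δ))
    (i : Fin K)
    (γ : Measure (ℕ → ℝ)) (hγ : IsIIDSeq γ (gaussianReal (1/2) (Real.toNNReal sigSq))) :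
    ((joint S (clipEnv Δ i γ)) {pr | regret S T pr.1 pr.2 ≥ Δ * T / 4}).toReal ≥
        ((joint S (clipEnv Δ i γ))
            {pr | (numPlays S pr.1 i T pr.2 : ℝ) ≤ (T : ℝ) / 2}).toReal - δ / 2 ∧
      ∫ pr, regret S T pr.1 pr.2 ∂(joint S (clipEnv Δ i γ)) ≥
        (7 * Δ / 8) *
          ∫ pr, ((T : ℝ) - numPlays S pr.1 i T pr.2) ∂(joint S (clipEnv Δ i γ)) :=
  clipped_gaussian_environment_regret_general S hΔ hδ hT i γ hγ

end BanditLB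
end

section
/- Let K ≥ 2, T ≥ max(32K, 601), and α ∈ [ max(2c₁·log T, 8K)/T , 1/4 ], where c₁ = (4/9)²·(3√5 + 1)². Then for any randomised K-armed bandit strategy over T rounds, sup over loss sequences ℓ_{1:T} ∈ V_{α,T} of E[R_T(ℓ_{1:T})] ≥ √(α·T·K)/25, where the expectation is taken with respect to the internal randomisation of the strategy. -/
/-!
Losses take the values `0` and `a = 2√α` only, which keeps `Q_T / (T K) ≤ a² / 4 = α`. In
environment `j` the loss of arm `j` is `a` with probability `(1 - c) / 2` and every other loss is
`a` with probability `1 / 2`, where `c = (2/5)√(K/T)`; each pull of an arm other than `j` then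
costs `a c / 2` in expectation.

Fixing the internal randomness makes the strategy a deterministic adapted policy. Changing
measure to fair coins, the entries the policy never observes integrate out of the likelihood
ratio, and a Hellinger (Cauchy–Schwarz) plus Jensen estimate shows that the expected number of
pulls of arm `j` in environment `j` exceeds its value `E₀ N_j` under fair coins by at most
`T √(KL · E₀ N_j)`, where `KL = -log(1 - c²)/2`. As `∑_j E₀ N_j = T`, Cauchy–Schwarz bounds
the total number of good pulls by `T + (3/10) T K`, so the regret averaged over the `K`
environments is at least `a c T / 10 = a √(T K) / 25`; some fixed loss table does at least as
well as the average.
-/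

open MeasureTheory ProbabilityTheory Real
open scoped ENNReal NNReal Classical

namespace BanditLB

variable {K : ℕ} {Ω : Type*} [MeasurableSpace Ω]

/-- The quadratic variation `Q_T = ∑_{t<T} ‖ℓ_t − μ_T‖²` of the loss sequence `ℓ`. -/
noncomputable def quadVar (K T : ℕ) (ℓ : ℕ → Fin K → ℝ) : ℝ :=
  ∑ t ∈ Finset.range T, ∑ i : Fin K,
    (ℓ t i - (1 / (T : ℝ)) * ∑ s ∈ Finset.range T, ℓ s i) ^ 2

open Finset

section ProductWeight

variable {ι : Type*} [Fintype ι]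

def prodWeight (w : ι → Bool → ℝ) (b : ι → Bool) : ℝ := ∏ p, w p (b p)

variable {w : ι → Bool → ℝ}

lemma prodWeight_nonneg (hw : ∀ p bit, 0 ≤ w p bit) (b : ι → Bool) : 0 ≤ prodWeight w b :=
  prod_nonneg fun p _ => hw p (b p)

variable [DecidableEq ι]

noncomputable def expect (w : ι → Bool → ℝ) (f : (ι → Bool) → ℝ) : ℝ :=
  ∑ b, prodWeight w b * f b

lemma sum_prodWeight (hw : ∀ p, w p false + w p true = 1) : ∑ b, prodWeight w b = 1 := by
  simp only [prodWeight, ← Fintype.prod_sum, Fintype.sum_bool, add_comm (w _ true), hw,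
    prod_const_one]

lemma expect_const (hw : ∀ p, w p false + w p true = 1) (x : ℝ) : expect w (fun _ => x) = x := by
  rw [expect, ← sum_mul, sum_prodWeight hw, one_mul]

lemma expect_add (f g : (ι → Bool) → ℝ) :
    expect w (fun b => f b + g b) = expect w f + expect w g := by
  simp only [expect, mul_add, sum_add_distrib]

lemma expect_sub (f g : (ι → Bool) → ℝ) :
    expect w (fun b => f b - g b) = expect w f - expect w g := by
  simp only [expect, mul_sub, sum_sub_distrib]

lemma expect_sum {α : Type*} (s : Finset α) (f : α → (ι → Bool) → ℝ) :
    expect w (fun b => ∑ a ∈ s, f a b) = ∑ a ∈ s, expect w (f a) := by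
  simp only [expect, mul_sum]
  exact sum_comm

lemma expect_mono (hw : ∀ p bit, 0 ≤ w p bit) {f g : (ι → Bool) → ℝ} (h : ∀ b, f b ≤ g b) :
    expect w f ≤ expect w g :=
  sum_le_sum fun b _ => mul_le_mul_of_nonneg_left (h b) (prodWeight_nonneg hw b)

/-- Pairing `b` with `b` flipped at `κ` replaces `φ (b κ)` by its average over both bits. -/
lemma sum_apply_mul_of_update_invariant (κ : ι) (φ : Bool → ℝ) {H : (ι → Bool) → ℝ}
    (hH : ∀ b bit, H (Function.update b κ bit) = H b) :
    ∑ b, φ (b κ) * H b = (φ false + φ true) / 2 * ∑ b, H b := by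
  set flip : (ι → Bool) → ι → Bool := fun b => Function.update b κ (!b κ)
  have hflip : Function.Involutive flip := fun b => by simp [flip]
  have hswap : ∑ b, φ (b κ) * H b = ∑ b, φ (!b κ) * H b :=
    Fintype.sum_equiv hflip.toPerm _ _ fun b => by simp [flip, hH]
  have hpair : ∀ b : ι → Bool, φ (b κ) + φ (!b κ) = φ false + φ true := fun b => by
    cases b κ <;> simp [add_comm]
  have h2 : 2 * ∑ b, φ (b κ) * H b = (φ false + φ true) * ∑ b, H b := by
    rw [two_mul]
    nth_rewrite 2 [hswap]
    rw [← sum_add_distrib, mul_sum]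
    exact sum_congr rfl fun b _ => by rw [← hpair b]; ring
  linarith

lemma expect_apply_mul_of_update_invariant (hw : ∀ p, w p false + w p true = 1) (κ : ι)
    (u : Bool → ℝ) {G : (ι → Bool) → ℝ} (hG : ∀ b bit, G (Function.update b κ bit) = G b) :
    expect w (fun b => u (b κ) * G b) = (w κ false * u false + w κ true * u true) * expect w G := by
  set R : (ι → Bool) → ℝ := fun b => (∏ p ∈ univ.erase κ, w p (b p)) * G b
  have hR : ∀ b bit, R (Function.update b κ bit) = R b := fun b bit => by
    simp only [R, hG]
    congr 1
    exact prod_congr rfl fun p hp => by rw [Function.update_of_ne (ne_of_mem_erase hp)]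
  have hsplit : ∀ b, prodWeight w b = w κ (b κ) * ∏ p ∈ univ.erase κ, w p (b p) := fun b =>
    (mul_prod_erase univ _ (mem_univ κ)).symm
  have hlhs : expect w (fun b => u (b κ) * G b) =
      (w κ false * u false + w κ true * u true) / 2 * ∑ b, R b := by
    rw [← sum_apply_mul_of_update_invariant κ (fun bit => w κ bit * u bit) hR]
    exact sum_congr rfl fun b _ => by rw [hsplit]; ring
  have hrhs : expect w G = (w κ false + w κ true) / 2 * ∑ b, R b := by
    rw [← sum_apply_mul_of_update_invariant κ (fun bit => w κ bit) hR]
    exact sum_congr rfl fun b _ => by rw [hsplit]; ring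
  rw [hlhs, hrhs, hw κ]
  ring

end ProductWeight

noncomputable def fairWeight {ι : Type*} : ι → Bool → ℝ := fun _ _ => 1 / 2

lemma fairWeight_nonneg {ι : Type*} (p : ι) (bit : Bool) : 0 ≤ fairWeight p bit := by
  norm_num [fairWeight]

lemma fairWeight_add {ι : Type*} (p : ι) : fairWeight p false + fairWeight p true = 1 := by
  norm_num [fairWeight]

abbrev Table (T K : ℕ) := Fin T × Fin K → Bool

section Policy

variable {T : ℕ} {pol : Table T K → Fin T → Fin K}

def IsAdaptedPolicy (pol : Table T K → Fin T → Fin K) : Prop :=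
  ∀ b b' t, (∀ s < t, pol b s = pol b' s ∧ b (s, pol b s) = b' (s, pol b s)) → pol b t = pol b' t

lemma IsAdaptedPolicy.eq_of_agree (hpol : IsAdaptedPolicy pol) {b b' : Table T K} {t : Fin T}
    (h : ∀ p : Fin T × Fin K, p.1 < t → b p = b' p) : pol b t = pol b' t := by
  induction t using WellFoundedLT.induction with
  | _ t ih => exact hpol b b' t fun s hs => ⟨ih s hs fun p hp => h p (hp.trans hs), h _ hs⟩

lemma IsAdaptedPolicy.update_apply_of_le (hpol : IsAdaptedPolicy pol) (b : Table T K)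
    {κ : Fin T × Fin K} (bit : Bool) {t : Fin T} (ht : t ≤ κ.1) :
    pol (Function.update b κ bit) t = pol b t :=
  hpol.eq_of_agree fun p hp =>
    Function.update_of_ne (by rintro rfl; exact (hp.trans_le ht).ne rfl) _ _

lemma IsAdaptedPolicy.update_eq_of_ne (hpol : IsAdaptedPolicy pol) {b : Table T K}
    {κ : Fin T × Fin K} (hκ : pol b κ.1 ≠ κ.2) (bit : Bool) :
    pol (Function.update b κ bit) = pol b := by
  funext t
  induction t using WellFoundedLT.induction with
  | _ t ih =>
    refine hpol _ _ t fun s hs => ⟨ih s hs, ?_⟩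
    rw [ih s hs]
    exact Function.update_of_ne (fun h => hκ (by rw [← h])) _ _

def pullCount (pol : Table T K → Fin T → Fin K) (j : Fin K) (b : Table T K) : ℝ :=
  ∑ t, if pol b t = j then 1 else 0

lemma pullCount_nonneg (j : Fin K) (b : Table T K) : 0 ≤ pullCount pol j b :=
  sum_nonneg fun _ _ => by split_ifs <;> norm_num

lemma pullCount_le (j : Fin K) (b : Table T K) : pullCount pol j b ≤ T := by
  calc pullCount pol j b ≤ ∑ _t : Fin T, (1 : ℝ) := sum_le_sum fun _ _ => by split_ifs <;> norm_num
    _ = T := by simp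

lemma sum_pullCount (b : Table T K) : ∑ j, pullCount pol j b = T := by
  simp only [pullCount]
  rw [sum_comm]
  simp

end Policy

section Environment

variable {T : ℕ} {pol : Table T K → Fin T → Fin K}

/-- Entry `(t, i)` of a table is `true` when arm `i` suffers the loss `a` at round `t`, so in
environment `j` the mean loss of arm `j` is lower than that of the other arms by `a c / 2`. -/
noncomputable def envWeight (c : ℝ) (j : Fin K) : Fin T × Fin K → Bool → ℝ :=
  fun p bit => if p.2 = j then (if bit then (1 - c) / 2 else (1 + c) / 2) else 1 / 2

def lrFactor (c : ℝ) (bit : Bool) : ℝ := if bit then 1 - c else 1 + c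

/-- The likelihood ratio of environment `j` against `fairWeight`, keeping the factors of column
`j` at the rounds where it is observed and at all rounds from `n` on: `n = 0` gives the full
likelihood ratio, `n = T` the one of the observations. -/
def partialLR (pol : Table T K → Fin T → Fin K) (c : ℝ) (j : Fin K) (n : ℕ) (b : Table T K) : ℝ :=
  ∏ t, if pol b t = j ∨ n ≤ t then lrFactor c (b (t, j)) else 1

lemma envWeight_nonneg {c : ℝ} (hc : |c| ≤ 1) (j : Fin K) (p : Fin T × Fin K) (bit : Bool) :
    0 ≤ envWeight c j p bit := by
  rw [abs_le] at hc
  unfold envWeight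
  split_ifs <;> linarith

lemma envWeight_add (c : ℝ) (j : Fin K) (p : Fin T × Fin K) :
    envWeight c j p false + envWeight c j p true = 1 := by
  unfold envWeight
  by_cases h : p.2 = j <;> simp only [h, if_true, if_false, Bool.false_eq_true] <;> ring

lemma prodWeight_envWeight (c : ℝ) (j : Fin K) (b : Table T K) :
    prodWeight (envWeight c j) b = prodWeight fairWeight b * partialLR pol c j 0 b := by
  have hfactor : ∀ p : Fin T × Fin K, envWeight c j p (b p) =
      fairWeight p (b p) * if p.2 = j then lrFactor c (b p) else 1 := fun p => by
    unfold envWeight fairWeight lrFactor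
    split_ifs <;> cases b p <;> simp_all <;> ring
  have hcol : ∏ p : Fin T × Fin K, (if p.2 = j then lrFactor c (b p) else 1) =
      ∏ t, lrFactor c (b (t, j)) := by
    rw [Fintype.prod_prod_type]
    simp
  calc prodWeight (envWeight c j) b = (∏ p, fairWeight p (b p)) *
        ∏ p : Fin T × Fin K, (if p.2 = j then lrFactor c (b p) else 1) := by
        rw [prodWeight, ← prod_mul_distrib]
        exact prod_congr rfl fun p _ => hfactor p
    _ = prodWeight fairWeight b * partialLR pol c j 0 b := by
        simp [hcol, prodWeight, partialLR]

lemma partialLR_eq_mul_succ {n : ℕ} (hn : n < T) (c : ℝ) (j : Fin K) (b : Table T K) :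
    partialLR pol c j n b = (if pol b ⟨n, hn⟩ = j then 1 else lrFactor c (b (⟨n, hn⟩, j))) *
      partialLR pol c j (n + 1) b := by
  set s : Fin T := ⟨n, hn⟩
  unfold partialLR
  rw [← mul_prod_erase _ _ (mem_univ s), ← mul_prod_erase _ _ (mem_univ s), ← mul_assoc]
  congr 1
  · by_cases h : pol b s = j <;> simp [h, s]
  · refine prod_congr rfl fun t ht => ?_
    have : (t : ℕ) ≠ n := fun h => ne_of_mem_erase ht (Fin.ext h)
    simp only [show n ≤ (t : ℕ) ↔ n + 1 ≤ t by omega]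

lemma IsAdaptedPolicy.partialLR_update (hpol : IsAdaptedPolicy pol) {b : Table T K} {j : Fin K}
    {s : Fin T} (hs : pol b s ≠ j) {n : ℕ} (hsn : (s : ℕ) < n) (c : ℝ) (bit : Bool) :
    partialLR pol c j n (Function.update b (s, j) bit) = partialLR pol c j n b := by
  unfold partialLR
  rw [hpol.update_eq_of_ne hs]
  refine prod_congr rfl fun t _ => ?_
  by_cases hts : t = s
  · subst hts
    simp [hs, not_le.mpr hsn]
  · rw [Function.update_of_ne (by simpa using hts)]

end Environment

section ChangeOfMeasure

variable {T : ℕ} {pol : Table T K → Fin T → Fin K}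

lemma lrFactor_pos {c : ℝ} (hc : |c| < 1) (bit : Bool) : 0 < lrFactor c bit := by
  rw [abs_lt] at hc
  cases bit <;> simp [lrFactor] <;> linarith

lemma partialLR_pos {c : ℝ} (hc : |c| < 1) (j : Fin K) (n : ℕ) (b : Table T K) :
    0 < partialLR pol c j n b :=
  prod_pos fun _ _ => by split_ifs <;> simp [lrFactor_pos hc]

lemma partialLR_horizon (c : ℝ) (j : Fin K) (b : Table T K) :
    partialLR pol c j T b = ∏ t, if pol b t = j then lrFactor c (b (t, j)) else 1 :=
  prod_congr rfl fun t _ => by simp [not_le.mpr t.2]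

/-- A round that does not pull arm `j` leaves its entry in column `j` unobserved, and averaging
over that entry removes its factor from the likelihood ratio since `lrFactor c` has mean one. -/
lemma IsAdaptedPolicy.expect_fair_mul_partialLR_succ (hpol : IsAdaptedPolicy pol) {n : ℕ}
    (hn : n < T) (c : ℝ) (j : Fin K) {f : Table T K → ℝ}
    (hf : ∀ b b', pol b = pol b' → f b = f b') :
    expect fairWeight (fun b => f b * partialLR pol c j (n + 1) b) =
      expect fairWeight (fun b => f b * partialLR pol c j n b) := by
  set s : Fin T := ⟨n, hn⟩
  set G : Table T K → ℝ := fun b => if pol b s = j then 0 else f b * partialLR pol c j (n + 1) b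
  set H : Table T K → ℝ := fun b => if pol b s = j then f b * partialLR pol c j (n + 1) b else 0
  have hG : ∀ b bit, G (Function.update b (s, j) bit) = G b := fun b bit => by
    simp only [G, hpol.update_apply_of_le (κ := (s, j)) b bit le_rfl]
    split_ifs with h
    · rfl
    · rw [hf _ _ (hpol.update_eq_of_ne h bit), hpol.partialLR_update h (Nat.lt_succ_self n) c bit]
  have hmean : fairWeight (s, j) false * lrFactor c false + fairWeight (s, j) true * lrFactor c true
      = 1 := by
    norm_num [fairWeight, lrFactor]
    ring
  calc expect fairWeight (fun b => f b * partialLR pol c j (n + 1) b)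
      = expect fairWeight G + expect fairWeight H := by
        rw [← expect_add]
        congr 1
        funext b
        simp only [G, H]
        split_ifs <;> ring
    _ = expect fairWeight (fun b => lrFactor c (b (s, j)) * G b) + expect fairWeight H := by
        rw [expect_apply_mul_of_update_invariant fairWeight_add (s, j) (lrFactor c) hG, hmean,
          one_mul]
    _ = expect fairWeight (fun b => f b * partialLR pol c j n b) := by
        rw [← expect_add]
        congr 1
        funext b
        rw [partialLR_eq_mul_succ hn]
        simp only [G, H]
        split_ifs <;> ring

lemma IsAdaptedPolicy.expect_envWeight (hpol : IsAdaptedPolicy pol) (c : ℝ) (j : Fin K)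
    {f : Table T K → ℝ} (hf : ∀ b b', pol b = pol b' → f b = f b') :
    expect (envWeight c j) f = expect fairWeight (fun b => f b * partialLR pol c j T b) := by
  have hpeel : ∀ n ≤ T, expect fairWeight (fun b => f b * partialLR pol c j n b) =
      expect fairWeight (fun b => f b * partialLR pol c j 0 b) := by
    intro n hn
    induction n with
    | zero => rfl
    | succ n ih => rw [hpol.expect_fair_mul_partialLR_succ (by omega) c j hf, ih (by omega)]
  rw [hpeel T le_rfl]
  refine sum_congr rfl fun b _ => ?_
  rw [prodWeight_envWeight (pol := pol)]
  ring

lemma IsAdaptedPolicy.expect_fair_partialLR (hpol : IsAdaptedPolicy pol) (c : ℝ) (j : Fin K) :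
    expect fairWeight (partialLR pol c j T) = 1 := by
  have h := hpol.expect_envWeight c j (f := fun _ => 1) fun _ _ _ => rfl
  rw [expect_const (envWeight_add c j)] at h
  simpa using h.symm

lemma IsAdaptedPolicy.expect_fair_log_partialLR (hpol : IsAdaptedPolicy pol) {c : ℝ}
    (hc : |c| < 1) (j : Fin K) :
    expect fairWeight (fun b => Real.log (partialLR pol c j T b)) =
      Real.log (1 - c ^ 2) / 2 * expect fairWeight (pullCount pol j) := by
  have hlog : ∀ b, Real.log (partialLR pol c j T b) =
      ∑ t, Real.log (lrFactor c (b (t, j))) * if pol b t = j then 1 else 0 := fun b => by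
    rw [partialLR_horizon, Real.log_prod fun t _ => by
      split_ifs <;> simp [(lrFactor_pos hc _).ne']]
    exact sum_congr rfl fun t _ => by split_ifs <;> simp
  have hmean : ∀ t : Fin T, fairWeight (t, j) false * Real.log (lrFactor c false) +
      fairWeight (t, j) true * Real.log (lrFactor c true) = Real.log (1 - c ^ 2) / 2 := fun t => by
    rw [abs_lt] at hc
    rw [show 1 - c ^ 2 = (1 + c) * (1 - c) by ring, Real.log_mul (by linarith) (by linarith)]
    norm_num [fairWeight, lrFactor]
    ring
  unfold pullCount
  rw [funext hlog, expect_sum, expect_sum, mul_sum]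
  refine sum_congr rfl fun t _ => ?_
  rw [expect_apply_mul_of_update_invariant fairWeight_add (t, j)
    (fun bit => Real.log (lrFactor c bit))
    fun b bit => by rw [hpol.update_apply_of_le (κ := (t, j)) b bit le_rfl], hmean]

end ChangeOfMeasure

section LikelihoodRatio

variable {X : Type*} [Fintype X] {W L : X → ℝ}

lemma sum_mul_abs_sub_one_le (hW : ∀ x, 0 ≤ W x) (hW1 : ∑ x, W x = 1) (hL : ∀ x, 0 ≤ L x)
    (hL1 : ∑ x, W x * L x = 1) :
    ∑ x, W x * |L x - 1| ≤ 2 * √(1 - (∑ x, W x * √(L x)) ^ 2) := by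
  set A := ∑ x, W x * √(L x)
  have hA : 0 ≤ A := sum_nonneg fun x _ => mul_nonneg (hW x) (Real.sqrt_nonneg _)
  have hsqL : ∀ x, √(L x) ^ 2 = L x := fun x => Real.sq_sqrt (hL x)
  have hsqW : ∀ x, √(W x) ^ 2 = W x := fun x => Real.sq_sqrt (hW x)
  have hmoment : ∀ ε : ℝ, ε ^ 2 = 1 → ∑ x, W x * (√(L x) + ε) ^ 2 = 2 + 2 * ε * A :=
    fun ε hε => by
      calc ∑ x, W x * (√(L x) + ε) ^ 2 = ∑ x, (W x * L x + 2 * ε * (W x * √(L x)) + W x) :=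
            sum_congr rfl fun x _ => by rw [add_sq, hsqL, hε]; ring
        _ = 2 + 2 * ε * A := by
            rw [sum_add_distrib, sum_add_distrib, hL1, hW1, ← mul_sum]
            ring
  calc ∑ x, W x * |L x - 1|
      = ∑ x, (√(W x) * |√(L x) + -1|) * (√(W x) * (√(L x) + 1)) := by
        refine sum_congr rfl fun x _ => ?_
        have hfac : L x - 1 = (√(L x) + -1) * (√(L x) + 1) := by
          linear_combination -hsqL x
        rw [hfac, abs_mul, abs_of_nonneg (by positivity : 0 ≤ √(L x) + 1)]
        linear_combination (-(|√(L x) + -1| * (√(L x) + 1))) * hsqW x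
    _ ≤ √(∑ x, (√(W x) * |√(L x) + -1|) ^ 2) * √(∑ x, (√(W x) * (√(L x) + 1)) ^ 2) :=
        Real.sum_mul_le_sqrt_mul_sqrt _ _ _
    _ = √(2 ^ 2 * (1 - A ^ 2)) := by
        simp_rw [mul_pow, sq_abs, hsqW]
        rw [hmoment (-1) (by norm_num), hmoment 1 (by norm_num), ← Real.sqrt_mul' _ (by linarith)]
        ring_nf
    _ = 2 * √(1 - A ^ 2) := by
        rw [Real.sqrt_mul (by positivity), Real.sqrt_sq zero_le_two]

lemma exp_sum_mul_log_div_two_le (hW : ∀ x, 0 ≤ W x) (hW1 : ∑ x, W x = 1)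
    (hL : ∀ x, 0 < L x) : Real.exp ((∑ x, W x * Real.log (L x)) / 2) ≤ ∑ x, W x * √(L x) := by
  have hsqrt : ∀ x, √(L x) = Real.exp (Real.log (L x) / 2) := fun x => by
    rw [Real.sqrt_eq_iff_mul_self_eq (hL x).le (Real.exp_pos _).le, ← Real.exp_add, add_halves,
      Real.exp_log (hL x)]
  have hjensen := convexOn_exp.map_sum_le (t := univ) (w := W) (p := fun x => Real.log (L x) / 2)
    (fun x _ => hW x) hW1 fun _ _ => Set.mem_univ _
  simp only [smul_eq_mul, ← hsqrt] at hjensen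
  rw [sum_div]
  simpa only [mul_div_assoc] using hjensen

lemma sum_mul_abs_sub_one_le_sqrt_neg_log (hW : ∀ x, 0 ≤ W x) (hW1 : ∑ x, W x = 1)
    (hL : ∀ x, 0 < L x) (hL1 : ∑ x, W x * L x = 1) :
    ∑ x, W x * |L x - 1| ≤ 2 * √(-∑ x, W x * Real.log (L x)) := by
  set s := ∑ x, W x * Real.log (L x)
  have hexp : Real.exp s ≤ (∑ x, W x * √(L x)) ^ 2 := by
    rw [show s = s / 2 + s / 2 by ring, Real.exp_add, ← sq]
    exact pow_le_pow_left₀ (Real.exp_pos _).le (exp_sum_mul_log_div_two_le hW hW1 hL) 2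
  have hle : 1 - (∑ x, W x * √(L x)) ^ 2 ≤ -s := by linarith [Real.add_one_le_exp s]
  calc ∑ x, W x * |L x - 1| ≤ 2 * √(1 - (∑ x, W x * √(L x)) ^ 2) :=
        sum_mul_abs_sub_one_le hW hW1 (fun x => (hL x).le) hL1
    _ ≤ 2 * √(-s) := by gcongr

/-- `-∑ x, W x * log (L x)` is the Kullback–Leibler divergence of `W` from the reweighted
measure `W * L`. -/
lemma sum_mul_mul_le_add_mul_sqrt (hW : ∀ x, 0 ≤ W x) (hW1 : ∑ x, W x = 1)
    (hL : ∀ x, 0 < L x) (hL1 : ∑ x, W x * L x = 1) {N : X → ℝ} {M : ℝ}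
    (hN : ∀ x, 0 ≤ N x ∧ N x ≤ M) :
    ∑ x, W x * (N x * L x) ≤ ∑ x, W x * N x + M * √(-∑ x, W x * Real.log (L x)) := by
  have hpoint : ∀ x, (L x - 1) * N x ≤ M / 2 * (|L x - 1| + (L x - 1)) := fun x => by
    obtain ⟨h0, hM⟩ := hN x
    rcases le_total (L x) 1 with h | h
    · rw [abs_of_nonpos (by linarith)]
      nlinarith
    · rw [abs_of_nonneg (by linarith)]
      nlinarith
  have hcentered : ∑ x, W x * (L x - 1) = 0 := by
    simp only [mul_sub, mul_one, sum_sub_distrib, hL1, hW1, sub_self]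
  have hM : 0 ≤ M := by
    obtain ⟨x, -, -⟩ := exists_ne_zero_of_sum_ne_zero (hW1.symm ▸ one_ne_zero)
    exact (hN x).1.trans (hN x).2
  calc ∑ x, W x * (N x * L x) = ∑ x, W x * N x + ∑ x, W x * ((L x - 1) * N x) := by
        rw [← sum_add_distrib]
        exact sum_congr rfl fun x _ => by ring
    _ ≤ ∑ x, W x * N x + ∑ x, W x * (M / 2 * (|L x - 1| + (L x - 1))) := by
        gcongr ∑ x, W x * N x + ?_
        exact sum_le_sum fun x _ => mul_le_mul_of_nonneg_left (hpoint x) (hW x)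
    _ = ∑ x, W x * N x + M / 2 * ∑ x, W x * |L x - 1| := by
        simp only [mul_add, mul_left_comm (W _), ← mul_sum, sum_add_distrib, hcentered]
        ring
    _ ≤ ∑ x, W x * N x + M * √(-∑ x, W x * Real.log (L x)) := by
        have := sum_mul_abs_sub_one_le_sqrt_neg_log hW hW1 hL hL1
        nlinarith

end LikelihoodRatio

section Pulls

variable {T : ℕ} {pol : Table T K → Fin T → Fin K}

/-- `-log (1 - c ^ 2) / 2` is the Kullback–Leibler divergence of a fair coin from a coin with
bias `c`, paid once for every pull of arm `j`. -/
lemma IsAdaptedPolicy.expect_env_pullCount_le (hpol : IsAdaptedPolicy pol) {c : ℝ} (hc : |c| < 1)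
    (j : Fin K) :
    expect (envWeight c j) (pullCount pol j) ≤ expect fairWeight (pullCount pol j) +
      T * √(-(Real.log (1 - c ^ 2) / 2) * expect fairWeight (pullCount pol j)) := by
  rw [hpol.expect_envWeight c j fun b b' h => by simp only [pullCount, h]]
  have h := sum_mul_mul_le_add_mul_sqrt (prodWeight_nonneg fairWeight_nonneg)
    (sum_prodWeight fairWeight_add) (partialLR_pos hc j T) (hpol.expect_fair_partialLR c j)
    fun b => ⟨pullCount_nonneg (pol := pol) j b, pullCount_le (pol := pol) j b⟩
  have hlog := hpol.expect_fair_log_partialLR hc j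
  unfold expect at hlog ⊢
  rwa [hlog, ← neg_mul] at h

/-- The plays are shared among the `K` arms, so by Cauchy–Schwarz the square roots of the
`K` baseline pull counts add up to at most `√(K T)`. -/
lemma IsAdaptedPolicy.sum_expect_env_pullCount_le (hpol : IsAdaptedPolicy pol) {c : ℝ}
    (hc : |c| < 1) :
    ∑ j, expect (envWeight c j) (pullCount pol j) ≤
      T + T * √(-(Real.log (1 - c ^ 2) / 2) * K * T) := by
  set κ := -(Real.log (1 - c ^ 2) / 2)
  set E : Fin K → ℝ := fun j => expect fairWeight (pullCount pol j)
  have hκ : 0 ≤ κ := by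
    have : Real.log (1 - c ^ 2) ≤ 0 := Real.log_nonpos (by nlinarith [sq_abs c, abs_nonneg c])
      (by nlinarith)
    simp only [κ]
    linarith
  have hE : ∑ j, E j = T := by
    rw [← expect_sum, funext fun b => sum_pullCount b, expect_const fairWeight_add]
  have hcs : ∑ j, √(E j) ≤ √K * √T := by
    have h := Real.sum_mul_le_sqrt_mul_sqrt univ (fun _ => (1 : ℝ)) fun j => √(E j)
    have hsq : ∀ j, √(E j) ^ 2 = E j := fun j => Real.sq_sqrt
      (sum_nonneg fun b _ =>
        mul_nonneg (prodWeight_nonneg fairWeight_nonneg b) (pullCount_nonneg j b))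
    simpa only [one_mul, one_pow, sum_const, card_univ, Fintype.card_fin, nsmul_eq_mul, mul_one,
      hsq, hE] using h
  calc ∑ j, expect (envWeight c j) (pullCount pol j) ≤ ∑ j, (E j + T * (√κ * √(E j))) :=
        sum_le_sum fun j _ => by rw [← Real.sqrt_mul hκ]; exact hpol.expect_env_pullCount_le hc j
    _ = T + T * √κ * ∑ j, √(E j) := by rw [sum_add_distrib, hE, mul_sum]; simp only [mul_assoc]
    _ ≤ T + T * √κ * (√K * √T) := by gcongr
    _ = T + T * √(κ * K * T) := by rw [Real.sqrt_mul (by positivity), Real.sqrt_mul hκ]; ring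

end Pulls

section Regret

variable {T : ℕ} {pol : Table T K → Fin T → Fin K}

def tableLoss (a : ℝ) (b : Table T K) (t : Fin T) (i : Fin K) : ℝ := if b (t, i) then a else 0

lemma IsAdaptedPolicy.expect_env_tableLoss_sub (hpol : IsAdaptedPolicy pol) (a c : ℝ) (j : Fin K)
    (t : Fin T) :
    expect (envWeight c j) (fun b => tableLoss a b t (pol b t) - tableLoss a b t j) =
      a * c / 2 * (1 - expect (envWeight c j) (fun b => if pol b t = j then 1 else 0)) := by
  set P : Fin K → ℝ := fun i => expect (envWeight c j) (fun b => if pol b t = i then 1 else 0)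
  have hw := envWeight_add (T := T) c j
  have hP : ∑ i, P i = 1 := by
    rw [← expect_sum]
    simpa using expect_const hw 1
  have hmean : ∀ i, envWeight c j (t, i) true * a = a / 2 - if i = j then a * c / 2 else 0 :=
    fun i => by by_cases h : i = j <;> simp [envWeight, h] <;> ring
  have hexpect : ∀ i {G : Table T K → ℝ}, (∀ b bit, G (Function.update b (t, i) bit) = G b) →
      expect (envWeight c j) (fun b => tableLoss a b t i * G b) =
        (a / 2 - if i = j then a * c / 2 else 0) * expect (envWeight c j) G := fun i G hG => by
    have h := expect_apply_mul_of_update_invariant hw (t, i) (fun bit => if bit then a else 0) hG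
    simp only [Bool.false_eq_true, if_false, if_true, mul_zero, zero_add, hmean] at h
    exact h
  have hplayed : ∀ i,
      expect (envWeight c j) (fun b => tableLoss a b t i * if pol b t = i then 1 else 0) =
        (a / 2 - if i = j then a * c / 2 else 0) * P i := fun i =>
    hexpect i fun b bit => by rw [hpol.update_apply_of_le (κ := (t, i)) b bit le_rfl]
  have hcol : expect (envWeight c j) (fun b => tableLoss a b t j) = a / 2 - a * c / 2 := by
    simpa [expect_const hw] using hexpect j (G := fun _ => 1) fun _ _ => rfl
  calc expect (envWeight c j) (fun b => tableLoss a b t (pol b t) - tableLoss a b t j)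
      = ∑ i, expect (envWeight c j) (fun b => tableLoss a b t i * if pol b t = i then 1 else 0) -
          expect (envWeight c j) (fun b => tableLoss a b t j) := by
        rw [← expect_sum, ← expect_sub]
        simp [mul_ite]
    _ = a * c / 2 * (1 - P j) := by
        simp only [hplayed, hcol, sub_mul, sum_sub_distrib, ← mul_sum, hP, ite_mul, zero_mul,
          sum_ite_eq', mem_univ, if_true]
        ring

lemma IsAdaptedPolicy.expect_env_pseudoRegret (hpol : IsAdaptedPolicy pol) (a c : ℝ) (j : Fin K) :
    expect (envWeight c j) (fun b => ∑ t, (tableLoss a b t (pol b t) - tableLoss a b t j)) =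
      a * c / 2 * (T - expect (envWeight c j) (pullCount pol j)) := by
  rw [expect_sum]
  simp only [hpol.expect_env_tableLoss_sub, ← mul_sum, sum_sub_distrib]
  unfold pullCount
  rw [expect_sum]
  simp

lemma IsAdaptedPolicy.sum_expect_env_pseudoRegret_ge (hpol : IsAdaptedPolicy pol) {a c : ℝ}
    (ha : 0 ≤ a) (hc0 : 0 ≤ c) (hc1 : c < 1) :
    a * c / 2 * (T * K - T - T * √(-(Real.log (1 - c ^ 2) / 2) * K * T)) ≤
      ∑ j, expect (envWeight c j)
        (fun b => ∑ t, (tableLoss a b t (pol b t) - tableLoss a b t j)) := by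
  have hpulls := hpol.sum_expect_env_pullCount_le (abs_lt.mpr ⟨by linarith, hc1⟩)
  rw [sum_congr rfl fun j _ => hpol.expect_env_pseudoRegret a c j, ← mul_sum, sum_sub_distrib]
  refine mul_le_mul_of_nonneg_left ?_ (by positivity)
  simp only [sum_const, card_univ, Fintype.card_fin, nsmul_eq_mul]
  linarith

end Regret

lemma sum_sq_sub_mean_le {T : ℕ} {f : ℕ → ℝ} {a : ℝ} (hf : ∀ t ∈ range T, 0 ≤ f t ∧ f t ≤ a) :
    ∑ t ∈ range T, (f t - 1 / T * ∑ s ∈ range T, f s) ^ 2 ≤ a ^ 2 / 4 * T := by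
  set m := 1 / (T : ℝ) * ∑ s ∈ range T, f s with hm
  have hsum : ∑ t ∈ range T, (f t - a / 2) = T * (m - a / 2) := by
    rcases Nat.eq_zero_or_pos T with rfl | hT
    · simp
    · have hTm : (T : ℝ) * m = ∑ s ∈ range T, f s := by rw [hm]; field_simp
      rw [sum_sub_distrib, sum_const, card_range, nsmul_eq_mul, mul_sub, hTm]
  calc ∑ t ∈ range T, (f t - m) ^ 2
      = ∑ t ∈ range T, (f t - a / 2) ^ 2 - 2 * (m - a / 2) * ∑ t ∈ range T, (f t - a / 2) +
          T * (m - a / 2) ^ 2 := by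
        rw [mul_sum, ← sum_sub_distrib]
        rw [show (T : ℝ) * (m - a / 2) ^ 2 = ∑ _t ∈ range T, (m - a / 2) ^ 2 by simp,
          ← sum_add_distrib]
        exact sum_congr rfl fun t _ => by ring
    _ = ∑ t ∈ range T, (f t - a / 2) ^ 2 - T * (m - a / 2) ^ 2 := by rw [hsum]; ring
    _ ≤ ∑ _t ∈ range T, a ^ 2 / 4 := by
        have : ∀ t ∈ range T, (f t - a / 2) ^ 2 ≤ a ^ 2 / 4 := fun t ht => by
          nlinarith [hf t ht]
        have := sum_le_sum this
        nlinarith [sq_nonneg (m - a / 2), (Nat.cast_nonneg T : (0 : ℝ) ≤ T)]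
    _ = a ^ 2 / 4 * T := by simp [mul_comm]

lemma exists_le_mul_integral_of_le_sum {X : Type*} [Fintype X] [Nonempty X] {μ : Measure Ω}
    [IsProbabilityMeasure μ] {F : X → Ω → ℝ} (hF : ∀ x, Integrable (F x) μ) {q : X → ℝ}
    (hq : ∀ x, 0 ≤ q x) {C : ℝ} (hC : ∀ ω, C ≤ ∑ x, q x * F x ω) :
    ∃ x, C ≤ (∑ x, q x) * ∫ ω, F x ω ∂μ := by
  obtain ⟨x, -, hx⟩ := exists_max_image univ (fun x => ∫ ω, F x ω ∂μ) univ_nonempty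
  refine ⟨x, ?_⟩
  have hint : ∀ y ∈ univ, Integrable (fun ω => q y * F y ω) μ := fun y _ => (hF y).const_mul _
  calc C = ∫ _ω, C ∂μ := by simp
    _ ≤ ∫ ω, ∑ y, q y * F y ω ∂μ :=
        integral_mono (integrable_const C) (integrable_finsetSum _ hint) hC
    _ = ∑ y, q y * ∫ ω, F y ω ∂μ := by
        rw [integral_finsetSum _ hint]
        simp only [integral_const_mul]
    _ ≤ ∑ y, q y * ∫ ω, F x ω ∂μ :=
        sum_le_sum fun y _ => mul_le_mul_of_nonneg_left (hx y (mem_univ y)) (hq y)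
    _ = (∑ y, q y) * ∫ ω, F x ω ∂μ := by rw [sum_mul]

lemma neg_log_one_sub_div_two_le {y : ℝ} (hy0 : 0 ≤ y) (hy : y ≤ 1 / 200) :
    -(Real.log (1 - y) / 2) ≤ 100 / 199 * y := by
  have hpos : 0 < 1 - y := by linarith
  have hlog := Real.one_sub_inv_le_log_of_pos hpos
  have hinv : (1 - y)⁻¹ ≤ 1 + 200 / 199 * y := by
    rw [inv_eq_one_div, div_le_iff₀ hpos]
    nlinarith
  linarith

section Bandit

variable {T : ℕ} {a c : ℝ}

def lossOf (T : ℕ) (a : ℝ) (b : Table T K) : ℕ → Fin K → ℝ :=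
  fun t i => if h : t < T then tableLoss a b ⟨t, h⟩ i else 0

def tablePolicy (S : Strategy K Ω) (T : ℕ) (a : ℝ) (ω : Ω) : Table T K → Fin T → Fin K :=
  fun b t => S.act (lossOf T a b) t ω

lemma lossOf_nonneg (ha : 0 ≤ a) (b : Table T K) (t : ℕ) (i : Fin K) : 0 ≤ lossOf T a b t i := by
  unfold lossOf tableLoss
  split_ifs <;> simp [ha]

lemma lossOf_le (ha : 0 ≤ a) (b : Table T K) (t : ℕ) (i : Fin K) : lossOf T a b t i ≤ a := by
  unfold lossOf tableLoss
  split_ifs <;> simp [ha]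

lemma isAdaptedPolicy_tablePolicy (S : Strategy K Ω) (T : ℕ) (a : ℝ) (ω : Ω) :
    IsAdaptedPolicy (tablePolicy S T a ω) := fun b b' t h => by
  refine S.adapted _ _ t ω fun s hs => ?_
  obtain ⟨hact, hentry⟩ := h ⟨s, hs.trans t.2⟩ hs
  refine ⟨hact, ?_⟩
  simp only [tablePolicy] at hact hentry
  simp only [lossOf, dif_pos (hs.trans t.2), tableLoss, hentry]

lemma quadVar_lossOf_le (ha : 0 ≤ a) (b : Table T K) :
    quadVar K T (lossOf T a b) ≤ a ^ 2 / 4 * T * K := by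
  unfold quadVar
  rw [sum_comm]
  calc ∑ i, ∑ t ∈ range T, (lossOf T a b t i - 1 / T * ∑ s ∈ range T, lossOf T a b s i) ^ 2
      ≤ ∑ _i : Fin K, a ^ 2 / 4 * T :=
        sum_le_sum fun i _ =>
          sum_sq_sub_mean_le fun t _ => ⟨lossOf_nonneg ha b t i, lossOf_le ha b t i⟩
    _ = a ^ 2 / 4 * T * K := by simp [mul_comm]

lemma abs_regret_lossOf_le (S : Strategy K Ω) (ha : 0 ≤ a) (hK : 0 < K) (b : Table T K) (ω : Ω) :
    |regret S T (lossOf T a b) ω| ≤ T * a := by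
  have hbound : ∀ i : ℕ → Fin K, 0 ≤ ∑ t ∈ range T, lossOf T a b t (i t) ∧
      ∑ t ∈ range T, lossOf T a b t (i t) ≤ T * a := fun i =>
    ⟨sum_nonneg fun t _ => lossOf_nonneg ha b t _,
      (sum_le_sum fun t _ => lossOf_le ha b t (i t)).trans (by simp)⟩
  have : Nonempty (Fin K) := ⟨⟨0, hK⟩⟩
  have hinf_nonneg := le_ciInf fun i : Fin K => (hbound fun _ => i).1
  have hinf_le := (ciInf_le (Finite.bddBelow_range fun i : Fin K =>
    ∑ t ∈ range T, lossOf T a b t i) ⟨0, hK⟩).trans (hbound fun _ => ⟨0, hK⟩).2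
  have hplayed := hbound fun t => S.act (lossOf T a b) t ω
  unfold regret
  rw [abs_le]
  constructor <;> linarith [hplayed.1, hplayed.2]

lemma integrable_regret_lossOf (S : Strategy K Ω) (ha : 0 ≤ a) (hK : 0 < K) (b : Table T K) :
    Integrable (regret S T (lossOf T a b)) S.μ := by
  have := S.prob
  have hmeas : Measurable (regret S T (lossOf T a b)) := by
    unfold regret
    refine (Finset.measurable_sum _ fun t _ => ?_).sub measurable_const
    exact (measurable_from_top : Measurable (lossOf T a b t)).comp
      ((S.meas_act t).comp (measurable_const.prodMk measurable_id))
  refine (integrable_const ((T : ℝ) * a)).mono' hmeas.aestronglyMeasurable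
    (Filter.Eventually.of_forall fun ω => ?_)
  rw [Real.norm_eq_abs]
  exact abs_regret_lossOf_le S ha hK b ω

lemma pseudoRegret_le_regret (S : Strategy K Ω) (b : Table T K) (ω : Ω) (j : Fin K) :
    ∑ t, (tableLoss a b t (tablePolicy S T a ω b t) - tableLoss a b t j) ≤
      regret S T (lossOf T a b) ω := by
  have hinf := ciInf_le (Finite.bddBelow_range fun i => ∑ t ∈ range T, lossOf T a b t i) j
  have hsum : ∀ g : ℕ → Fin K,
      ∑ t : Fin T, tableLoss a b t (g t) = ∑ t ∈ range T, lossOf T a b t (g t) := fun g => by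
    rw [← Fin.sum_univ_eq_sum_range]
    exact sum_congr rfl fun t _ => by simp [lossOf]
  have hplayed := hsum fun t => S.act (lossOf T a b) t ω
  have harm := hsum fun _ => j
  unfold regret tablePolicy
  rw [sum_sub_distrib]
  linarith

lemma sum_expect_env_regret_ge (S : Strategy K Ω) (hK : 2 ≤ K) (hT : 0 < T) (ha : 0 ≤ a)
    (hc0 : 0 ≤ c) (hc1 : c < 1) (hkl : -(Real.log (1 - c ^ 2) / 2) ≤ 9 / 100 * (K / T)) (ω : Ω) :
    a * c * T * K / 10 ≤ ∑ j, expect (envWeight c j) (fun b => regret S T (lossOf T a b) ω) := by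
  have hTR : (0 : ℝ) < T := by exact_mod_cast hT
  have hK2 : (2 : ℝ) ≤ K := by exact_mod_cast hK
  have hsqrt : √(-(Real.log (1 - c ^ 2) / 2) * K * T) ≤ 3 / 10 * K := by
    refine Real.sqrt_le_iff.mpr ⟨by positivity, ?_⟩
    calc -(Real.log (1 - c ^ 2) / 2) * K * T ≤ 9 / 100 * (K / T) * K * T := by gcongr
      _ = (3 / 10 * K) ^ 2 := by field_simp; ring
  calc a * c * T * K / 10 = a * c / 2 * (T * K / 5) := by ring
    _ ≤ a * c / 2 * (T * K - T - T * √(-(Real.log (1 - c ^ 2) / 2) * K * T)) := by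
        refine mul_le_mul_of_nonneg_left ?_ (by positivity)
        nlinarith [mul_le_mul_of_nonneg_left hsqrt hTR.le]
    _ ≤ ∑ j, expect (envWeight c j) (fun b => ∑ t, (tableLoss a b t (tablePolicy S T a ω b t) -
          tableLoss a b t j)) :=
        (isAdaptedPolicy_tablePolicy S T a ω).sum_expect_env_pseudoRegret_ge ha hc0 hc1
    _ ≤ ∑ j, expect (envWeight c j) (fun b => regret S T (lossOf T a b) ω) :=
        sum_le_sum fun j _ => expect_mono (envWeight_nonneg (abs_le.mpr ⟨by linarith, hc1.le⟩) j)
          fun b => pseudoRegret_le_regret S b ω j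

/-- A strategy facing a table drawn from an environment chosen uniformly at random has large
expected regret, hence also against some fixed table. -/
lemma exists_table_le_integral_regret (S : Strategy K Ω) (hK : 2 ≤ K) (hT : 0 < T) (ha : 0 ≤ a)
    (hc0 : 0 ≤ c) (hc1 : c < 1) (hkl : -(Real.log (1 - c ^ 2) / 2) ≤ 9 / 100 * (K / T)) :
    ∃ b : Table T K, a * c * T / 10 ≤ ∫ ω, regret S T (lossOf T a b) ω ∂S.μ := by
  have := S.prob
  have hc : |c| ≤ 1 := abs_le.mpr ⟨by linarith, hc1.le⟩
  have hw : ∀ (j : Fin K) (b : Table T K), 0 ≤ prodWeight (envWeight c j) b := fun j =>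
    prodWeight_nonneg (envWeight_nonneg hc j)
  obtain ⟨b, hb⟩ := exists_le_mul_integral_of_le_sum (integrable_regret_lossOf S ha (by omega))
    (q := fun b => ∑ j, prodWeight (envWeight c j) b) (fun b => sum_nonneg fun j _ => hw j b)
    fun ω => (sum_expect_env_regret_ge S hK hT ha hc0 hc1 hkl ω).trans_eq <| by
      simp only [expect, sum_mul]
      exact sum_comm
  have hq : ∑ b : Table T K, ∑ j, prodWeight (envWeight c j) b = K := by
    rw [sum_comm]
    simp [sum_prodWeight (envWeight_add c _)]
  rw [hq] at hb
  have hKR : (0 : ℝ) < K := by exact_mod_cast (by omega : 0 < K)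
  exact ⟨b, le_of_mul_le_mul_left (by linarith) hKR⟩

lemma exists_table_mul_sqrt_le_integral_regret (S : Strategy K Ω) (hK : 2 ≤ K) (hT : 32 * K ≤ T)
    (ha : 0 ≤ a) : ∃ b : Table T K, a * √(T * K) / 25 ≤ ∫ ω, regret S T (lossOf T a b) ω ∂S.μ := by
  have hT0 : 0 < T := by omega
  have hTR : (0 : ℝ) < T := by exact_mod_cast hT0
  have hx0 : (0 : ℝ) ≤ K / T := by positivity
  have hx : (K : ℝ) / T ≤ 1 / 32 := by
    rw [div_le_iff₀ hTR]
    have : ((32 * K : ℕ) : ℝ) ≤ T := by exact_mod_cast hT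
    push_cast at this
    linarith
  set c := 2 / 5 * √((K : ℝ) / T) with hc
  have hc1 : c < 1 := by
    have : √((K : ℝ) / T) ≤ 1 := Real.sqrt_le_one.mpr (by linarith)
    linarith
  have hkl : -(Real.log (1 - c ^ 2) / 2) ≤ 9 / 100 * (K / T) := by
    have hc2 : c ^ 2 = 4 / 25 * (K / T) := by rw [hc, mul_pow, Real.sq_sqrt hx0]; ring
    have := neg_log_one_sub_div_two_le (sq_nonneg c) (by linarith)
    linarith
  obtain ⟨b, hb⟩ := exists_table_le_integral_regret S hK hT0 ha (by positivity) hc1 hkl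
  refine ⟨b, le_of_eq_of_le ?_ hb⟩
  have hsqrt : √((K : ℝ) / T) * T = √(T * K) := by
    rw [eq_comm, Real.sqrt_eq_iff_mul_self_eq (by positivity) (by positivity),
      show √((K : ℝ) / T) * T * (√((K : ℝ) / T) * T) = √((K : ℝ) / T) * √((K : ℝ) / T) * T * T by
        ring, Real.mul_self_sqrt hx0]
    field_simp
  rw [← hsqrt]
  ring

end Bandit

/-- Theorem 5 of the paper: second-order lower bound.  For
`α ∈ [max(2c₁·log T, 8K)/T, 1/4]` with `c₁ = (4/9)²(3√5+1)²`, every strategy has a loss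
sequence in the small-variation ball `V_{α,T}` (i.e. `Q_T/(TK) ≤ α`) with expected regret
at least `√(αTK)/25`. -/
theorem second_order_lower_bound
    {K T : ℕ} (hK : 2 ≤ K) (hT : T ≥ max (32 * K) 601) {α : ℝ}
    (hα : α ∈ Set.Icc
      (max (2 * ((4/9)^2 * (3 * Real.sqrt 5 + 1)^2) * Real.log T) (8 * (K : ℝ)) / T)
      (1/4))
    {Ω : Type*} [MeasurableSpace Ω] (S : Strategy K Ω) :
    ∃ ℓ : ℕ → Fin K → ℝ,
      (∀ t < T, ∀ i, ℓ t i ∈ Set.Icc (0:ℝ) 1) ∧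
      quadVar K T ℓ / ((T : ℝ) * K) ≤ α ∧
      ∫ ω, regret S T ℓ ω ∂S.μ ≥ Real.sqrt (α * T * K) / 25 := by
  have hT32 : 32 * K ≤ T := (le_max_left _ _).trans hT
  have hTK : (0 : ℝ) < T * K := by
    have : 0 < T * K := Nat.mul_pos (by omega) (by omega)
    exact_mod_cast this
  have hα0 : 0 ≤ α := le_trans (div_nonneg ((by positivity : (0 : ℝ) ≤ 8 * K).trans
    (le_max_right _ _)) (Nat.cast_nonneg T)) hα.1
  have ha1 : 2 * √α ≤ 1 := by
    have : √α ≤ 1 / 2 := Real.sqrt_le_iff.mpr ⟨by norm_num, by linarith [hα.2]⟩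
    linarith
  obtain ⟨b, hb⟩ := exists_table_mul_sqrt_le_integral_regret S hK hT32 (by positivity : 0 ≤ 2 * √α)
  refine ⟨lossOf T (2 * √α) b, fun t _ i => ⟨lossOf_nonneg (by positivity) b t i,
    (lossOf_le (by positivity) b t i).trans ha1⟩, ?_, ?_⟩
  · rw [div_le_iff₀ hTK]
    calc quadVar K T (lossOf T (2 * √α) b) ≤ (2 * √α) ^ 2 / 4 * T * K :=
          quadVar_lossOf_le (by positivity) b
      _ = α * (T * K) := by rw [mul_pow, Real.sq_sqrt hα0]; ring
  · rw [mul_assoc, Real.sqrt_mul hα0]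
    linarith [mul_nonneg (Real.sqrt_nonneg α) (Real.sqrt_nonneg ((T : ℝ) * K))]

end BanditLB
end

section
/- Let σ > 0, ε ∈ ℝ, and let Z be a Gaussian random variable with mean 1/2 and variance σ². Define X = clip_{[0,1]}(Z) and Y = clip_{[0,1]}(Z − ε), where clip_{[0,1]}(x) = min(1, max(0, x)). Then KL( law(X), law(Y) ) ≤ ε²/(2σ²), where KL denotes the Kullback–Leibler divergence between the distributions of X and Y on [0,1]. -/
open MeasureTheory ProbabilityTheory Real
open scoped ENNReal NNReal Classical

namespace BanditLB

variable {K : ℕ} {Ω : Type*} [MeasurableSpace Ω]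

/-! Clipping is a measurable map, so by the data processing inequality the divergence is at most
that between the unclipped laws `N(1/2, σ²)` and `N(1/2 - ε, σ²)`. Their log-likelihood ratio is
affine, `ε (x - 1/2) / σ² + ε² / (2σ²)`, and its mean under `N(1/2, σ²)` is `ε² / (2σ²)`. -/

lemma klDiv_eq_informationTheory_klDiv {α : Type*} [MeasurableSpace α] {μ ν : Measure α}
    (h : μ.real Set.univ = ν.real Set.univ) : klDiv μ ν = InformationTheory.klDiv μ ν := by
  by_cases hμν : μ ≪ ν ∧ Integrable (llr μ ν) μ
  · rw [klDiv, if_pos hμν, InformationTheory.klDiv_of_ac_of_integrable hμν.1 hμν.2, h,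
      add_sub_cancel_right]
  · rw [klDiv, if_neg hμν, eq_comm, InformationTheory.klDiv_eq_top_iff]
    exact fun h₁ h₂ => hμν ⟨h₁, h₂⟩

lemma gaussianReal_absolutelyContinuous_gaussianReal (μ₁ μ₂ : ℝ) {v : ℝ≥0} (hv : v ≠ 0) :
    gaussianReal μ₁ v ≪ gaussianReal μ₂ v :=
  (gaussianReal_absolutelyContinuous μ₁ hv).trans (gaussianReal_absolutelyContinuous' μ₂ hv)

lemma gaussianPDFReal_eq_mul_exp (μ₁ μ₂ : ℝ) (v : ℝ≥0) (x : ℝ) :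
    gaussianPDFReal μ₁ v x
      = gaussianPDFReal μ₂ v x * rexp ((μ₁ - μ₂) * (x - μ₁) / v + (μ₁ - μ₂) ^ 2 / (2 * v)) := by
  simp only [gaussianPDFReal]
  rw [mul_assoc _ (rexp _), ← Real.exp_add]
  congr 2
  ring

lemma llr_gaussianReal (μ₁ μ₂ : ℝ) {v : ℝ≥0} (hv : v ≠ 0) :
    llr (gaussianReal μ₁ v) (gaussianReal μ₂ v)
      =ᵐ[gaussianReal μ₁ v] fun x => (μ₁ - μ₂) * (x - μ₁) / v + (μ₁ - μ₂) ^ 2 / (2 * v) := by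
  have hac := gaussianReal_absolutelyContinuous_gaussianReal μ₁ μ₂ hv
  have hratio := Measure.rnDeriv_eq_div (gaussianReal_absolutelyContinuous μ₁ hv)
    (gaussianReal_absolutelyContinuous μ₂ hv)
  filter_upwards [hac.ae_le hratio,
    (gaussianReal_absolutelyContinuous μ₁ hv).ae_le (rnDeriv_gaussianReal μ₁ v),
    (gaussianReal_absolutelyContinuous μ₁ hv).ae_le (rnDeriv_gaussianReal μ₂ v)]
    with x hx h₁ h₂
  rw [llr, hx, h₁, h₂, ENNReal.toReal_div, toReal_gaussianPDF, toReal_gaussianPDF,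
    gaussianPDFReal_eq_mul_exp μ₁ μ₂, mul_div_cancel_left₀ _ (gaussianPDFReal_pos _ _ _ hv).ne',
    Real.log_exp]

lemma klDiv_gaussianReal (μ₁ μ₂ : ℝ) {v : ℝ≥0} (hv : v ≠ 0) :
    InformationTheory.klDiv (gaussianReal μ₁ v) (gaussianReal μ₂ v)
      = ENNReal.ofReal ((μ₁ - μ₂) ^ 2 / (2 * v)) := by
  have hac := gaussianReal_absolutelyContinuous_gaussianReal μ₁ μ₂ hv
  have hllr := llr_gaussianReal μ₁ μ₂ hv
  have hid : Integrable (fun x => x) (gaussianReal μ₁ v) :=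
    (memLp_id_gaussianReal 1).integrable le_rfl
  have hcentered : Integrable (fun x => x - μ₁) (gaussianReal μ₁ v) :=
    hid.sub (integrable_const _)
  have hmean : ∫ x, (x - μ₁) ∂gaussianReal μ₁ v = 0 := by
    rw [integral_sub hid (integrable_const _),
      integral_id_gaussianReal, integral_const, probReal_univ, one_smul, sub_self]
  have hint : Integrable (fun x => (μ₁ - μ₂) * (x - μ₁) / v + (μ₁ - μ₂) ^ 2 / (2 * v))
      (gaussianReal μ₁ v) :=
    ((hcentered.const_mul _).div_const _).add (integrable_const _)
  rw [InformationTheory.klDiv_of_ac_of_integrable hac ((integrable_congr hllr).2 hint),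
    integral_congr_ae hllr, integral_add ((hcentered.const_mul _).div_const _) (integrable_const _),
    integral_div, integral_const_mul, hmean]
  simp

/-- Lemma 8 of the paper: if `Z ~ N(1/2, σ²)`, `X = clip_{[0,1]}(Z)`
and `Y = clip_{[0,1]}(Z − ε)`, then `KL(law X, law Y) ≤ ε²/(2σ²)`. -/
theorem clipped_gaussian_kl {σ ε : ℝ} (hσ : 0 < σ) :
    klDiv ((gaussianReal (1/2) ⟨σ ^ 2, sq_nonneg σ⟩).map clip01)
        ((gaussianReal (1/2) ⟨σ ^ 2, sq_nonneg σ⟩).map fun z => clip01 (z - ε))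
      ≤ ENNReal.ofReal (ε ^ 2 / (2 * σ ^ 2)) := by
  set v : ℝ≥0 := ⟨σ ^ 2, sq_nonneg σ⟩
  have hv : v ≠ 0 := fun h => (pow_pos hσ 2).ne' (congrArg NNReal.toReal h)
  have hclip : Measurable clip01 := by unfold clip01; fun_prop
  have hshift : (gaussianReal (1/2) v).map (fun z => clip01 (z - ε))
      = (gaussianReal (1/2 - ε) v).map clip01 := by
    rw [← gaussianReal_map_sub_const, Measure.map_map hclip (measurable_sub_const ε)]
    rfl
  rw [hshift, klDiv_eq_informationTheory_klDiv (by simp [measureReal_def, hclip])]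
  calc _ ≤ InformationTheory.klDiv (gaussianReal (1/2) v) (gaussianReal (1/2 - ε) v) :=
        InformationTheory.klDiv_map_le _ _ hclip
    _ = ENNReal.ofReal (ε ^ 2 / (2 * σ ^ 2)) := by
        rw [klDiv_gaussianReal _ _ hv, sub_sub_cancel]
        rfl

end BanditLB
end

section
/- Let K ≥ 2, α ∈ (0,1), and let c₁ = (4/9)²·(3√5 + 1)². Fix j ∈ {1,…,K} and set ε = (1/2)·√((α/2)(1−α/2)·K/T). Let the losses ℓ_{i,t} ∈ {0,1}, for 1 ≤ i ≤ K and 1 ≤ t ≤ T, be independent with ℓ_{j,t} ~ Bernoulli(α/2) and ℓ_{i,t} ~ Bernoulli(α/2 + ε) for i ≠ j. If T ≥ 8K/α and δ ∈ (0,1) satisfies T·α ≥ c₁·log(K/δ), then P( Q_T > α·T·K ) ≤ δ, where Q_T = ∑_{t=1}^T ∑_{i=1}^K (ℓ_{i,t} − μ_{i,T})² with μ_{i,T} = (1/T)·∑_{t=1}^T ℓ_{i,t}. -/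
/-!
Losses lie in `[0, 1]`, so `ℓ² ≤ ℓ` and the quadratic variation of each arm is at most the
sum of its losses: `Q_T` is at most the total loss `S`. The condition on `T` forces `ε ≤ α/8`,
so `S` is a sum of `KT` independent Bernoulli variables of means at most `5α/8`. The Chernoff
bound at `λ = log 2`, where each mgf is `1 + p ≤ exp p`, gives
`P(S ≥ αTK) ≤ exp(-(log 2 - 5/8) αTK)`, which is at most `δ` since `2 c₁ (log 2 - 5/8) ≥ 1`.
-/

open MeasureTheory ProbabilityTheory Real
open scoped ENNReal NNReal Classical

namespace BanditLB

variable {K : ℕ} {Ω : Type*} [MeasurableSpace Ω]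

section Bernoulli

variable {p : ℝ}

lemma integrable_bern (f : ℝ → ℝ) : Integrable f (bern p) :=
  ((integrable_dirac enorm_lt_top).smul_measure ENNReal.ofReal_ne_top).add_measure
    ((integrable_dirac enorm_lt_top).smul_measure ENNReal.ofReal_ne_top)

lemma integral_bern (hp₀ : 0 ≤ p) (hp₁ : p ≤ 1) (f : ℝ → ℝ) :
    ∫ x, f x ∂(bern p) = p * f 1 + (1 - p) * f 0 := by
  rw [bern, integral_add_measure
      ((integrable_dirac enorm_lt_top).smul_measure ENNReal.ofReal_ne_top)
      ((integrable_dirac enorm_lt_top).smul_measure ENNReal.ofReal_ne_top),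
    integral_smul_measure, integral_smul_measure, integral_dirac, integral_dirac,
    ENNReal.toReal_ofReal hp₀, ENNReal.toReal_ofReal (by linarith), smul_eq_mul, smul_eq_mul]

lemma bern_compl_Icc : bern p (Set.Icc 0 1)ᶜ = 0 := by
  simp [bern]

variable {μ : Measure Ω} {X : Ω → ℝ}

lemma ae_mem_Icc_of_map_eq_bern (hX : Measurable X) (h : μ.map X = bern p) :
    ∀ᵐ ω ∂μ, X ω ∈ Set.Icc (0 : ℝ) 1 :=
  ae_of_ae_map hX.aemeasurable (h ▸ measure_eq_zero_iff_ae_notMem.1 bern_compl_Icc |>.mono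
    fun _ hx => not_not.1 hx)

lemma integrable_exp_mul_of_map_eq_bern (hX : Measurable X) (h : μ.map X = bern p) (t : ℝ) :
    Integrable (fun ω => exp (t * X ω)) μ :=
  (integrable_map_measure (g := fun x => exp (t * x))
    (by fun_prop : Measurable fun x : ℝ => exp (t * x)).aestronglyMeasurable
    hX.aemeasurable).1 (h ▸ integrable_bern _)

lemma mgf_of_map_eq_bern (hX : Measurable X) (h : μ.map X = bern p) (hp₀ : 0 ≤ p)
    (hp₁ : p ≤ 1) (t : ℝ) : mgf X μ t = 1 + p * (exp t - 1) := by
  rw [mgf, ← integral_map (f := fun x => exp (t * x)) hX.aemeasurable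
    (by fun_prop : Measurable fun x : ℝ => exp (t * x)).aestronglyMeasurable, h,
    integral_bern hp₀ hp₁]
  simp only [mul_one, mul_zero, exp_zero]
  ring

end Bernoulli

theorem measure_sum_ge_le_of_map_eq_bern {ι : Type*} [Fintype ι] {μ : Measure Ω}
    {X : ι → Ω → ℝ} {p : ι → ℝ} (hX : ∀ i, Measurable (X i)) (hindep : iIndepFun X μ)
    (hbern : ∀ i, μ.map (X i) = bern (p i)) (hp₀ : ∀ i, 0 ≤ p i) (hp₁ : ∀ i, p i ≤ 1)
    {t : ℝ} (ht : 0 ≤ t) (a : ℝ) :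
    μ.real {ω | a ≤ ∑ i, X i ω} ≤ exp (-t * a + (exp t - 1) * ∑ i, p i) := by
  have := hindep.isProbabilityMeasure
  have hchernoff := measure_ge_le_exp_mul_mgf (X := ∑ i, X i) a ht
    (hindep.integrable_exp_mul_sum hX fun i _ => integrable_exp_mul_of_map_eq_bern (hX i)
      (hbern i) t)
  simp only [hindep.mgf_sum hX, mgf_of_map_eq_bern (hX _) (hbern _) (hp₀ _) (hp₁ _),
    Finset.sum_apply] at hchernoff
  calc μ.real {ω | a ≤ ∑ i, X i ω}
      ≤ exp (-t * a) * ∏ i, (1 + p i * (exp t - 1)) := hchernoff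
    _ ≤ exp (-t * a) * ∏ i, exp (p i * (exp t - 1)) := by
        have hexp : 0 ≤ exp t - 1 := by linarith [one_le_exp ht]
        refine mul_le_mul_of_nonneg_left (Finset.prod_le_prod (fun i _ => ?_) fun i _ => ?_)
          (exp_pos _).le
        · nlinarith [hp₀ i]
        · linarith [add_one_le_exp (p i * (exp t - 1))]
    _ = exp (-t * a + (exp t - 1) * ∑ i, p i) := by
        rw [← exp_sum, ← exp_add, Finset.mul_sum]
        simp only [mul_comm]

lemma sum_sq_sub_mean_le_sum {ι : Type*} [Fintype ι] (f : ι → ℝ)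
    (hf : ∀ i, f i ∈ Set.Icc (0 : ℝ) 1) :
    ∑ i, (f i - 1 / (Fintype.card ι : ℝ) * ∑ j, f j) ^ 2 ≤ ∑ i, f i := by
  set n : ℝ := ((Fintype.card ι : ℕ) : ℝ)
  set m := 1 / n * ∑ j, f j
  have hnm : n * m = ∑ j, f j := by
    rcases isEmpty_or_nonempty ι with _ | _
    · simp [n]
    · have : n ≠ 0 := by positivity
      simp only [m]
      field_simp
  calc ∑ i, (f i - m) ^ 2 = ∑ i, f i ^ 2 - n * m ^ 2 := by
        simp only [sub_sq, Finset.sum_add_distrib, Finset.sum_sub_distrib, ← Finset.sum_mul,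
          Finset.sum_const, Finset.card_univ, nsmul_eq_mul]
        rw [← Finset.mul_sum, ← hnm]
        ring
    _ ≤ ∑ i, f i ^ 2 := sub_le_self _ (by positivity)
    _ ≤ ∑ i, f i := Finset.sum_le_sum fun i _ => by obtain ⟨h₀, h₁⟩ := hf i; nlinarith

lemma sum_sum_sq_sub_mean_le_sum_prod {ι κ : Type*} [Fintype ι] [Fintype κ]
    (f : ι → κ → ℝ) (hf : ∀ i t, f i t ∈ Set.Icc (0 : ℝ) 1) :
    ∑ t, ∑ i, (f i t - 1 / (Fintype.card κ : ℝ) * ∑ s, f i s) ^ 2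
      ≤ ∑ q : ι × κ, f q.1 q.2 := by
  rw [Finset.sum_comm, Fintype.sum_prod_type]
  exact Finset.sum_le_sum fun i _ => sum_sq_sub_mean_le_sum (f i) (hf i)

lemma half_sqrt_le_of_ge {α K T : ℝ} (hα : 0 < α) (hK : 0 ≤ K) (hT : T ≥ 8 * K / α) :
    1 / 2 * √(α / 2 * (1 - α / 2) * K / T) ≤ α / 8 := by
  have hKT₀ : 0 ≤ K / T := div_nonneg hK (le_trans (by positivity) hT)
  have hKT : K / T ≤ α / 8 := by
    rcases (le_trans (by positivity) hT : (0 : ℝ) ≤ T).eq_or_lt with hT₀ | hT₀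
    · simp [← hT₀]; positivity
    · rw [div_le_iff₀ hT₀]; rw [ge_iff_le, div_le_iff₀ hα] at hT; linarith
  have : √(α / 2 * (1 - α / 2) * K / T) ≤ α / 4 := by
    rw [sqrt_le_left (by positivity), mul_div_assoc]
    nlinarith [mul_nonneg hα.le hKT₀]
  linarith

lemma mul_log_two_sub_le_log {x K δ : ℝ} (hK : 2 ≤ K) (hδ : 0 < δ) (hx₀ : 0 ≤ x)
    (hx : x ≥ (4 / 9) ^ 2 * (3 * √5 + 1) ^ 2 * log (K / δ)) :
    -log 2 * (x * K) + 5 / 8 * (x * K) ≤ log δ := by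
  have hlog : log (K / δ) = log K - log δ := log_div (by positivity) hδ.ne'
  have hlogK : 0 ≤ log K := log_nonneg (by linarith)
  have hlog2 : 0.6931471803 < log 2 := log_two_gt_d9
  have hsqrt5 : 2 ≤ √5 := le_sqrt_of_sq_le (by norm_num)
  have hc₁ : 9 ≤ (4 / 9) ^ 2 * (3 * √5 + 1) ^ 2 := by nlinarith
  have hxK : 0 ≤ (log 2 - 5 / 8) * x * (K - 2) := by
    apply mul_nonneg (mul_nonneg _ hx₀) <;> linarith
  rcases le_or_gt (log (K / δ)) 0 with hneg | hpos
  · nlinarith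
  · have : 9 * log (K / δ) ≤ x := by nlinarith
    nlinarith

/-- Part 2 of the proof of Theorem 5: tail bound on the quadratic
variation.  With independent losses, arm `j` being `Ber(α/2)` and all other arms
`Ber(α/2 + ε)` where `ε = (1/2)·√((α/2)(1−α/2)K/T)`, if `T ≥ 8K/α` and
`T·α ≥ c₁·log(K/δ)` with `c₁ = (4/9)²(3√5+1)²`, then `P(Q_T > αTK) ≤ δ`. -/
theorem quadratic_variation_tail
    {K T : ℕ} (hK : 2 ≤ K) {α : ℝ} (hα : α ∈ Set.Ioo (0:ℝ) 1) (j : Fin K)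
    (hT : (T : ℝ) ≥ 8 * K / α) {δ : ℝ} (hδ : δ ∈ Set.Ioo (0:ℝ) 1)
    (hTα : (T : ℝ) * α ≥ (4/9)^2 * (3 * Real.sqrt 5 + 1)^2 * Real.log (K / δ))
    {Ω : Type*} [MeasurableSpace Ω] (μ : Measure Ω) [IsProbabilityMeasure μ]
    (L : Fin K → Fin T → Ω → ℝ)
    (hmeas : ∀ i t, Measurable (L i t))
    (hindep : iIndepFun
      (fun q : Fin K × Fin T => L q.1 q.2) μ)
    (hdist : ∀ i t, μ.map (L i t) = bern (if i = j then α / 2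
      else α / 2 + (1/2) * Real.sqrt ((α/2) * (1 - α/2) * K / T))) :
    μ {ω | (∑ t : Fin T, ∑ i : Fin K,
        (L i t ω - (1 / (T : ℝ)) * ∑ s : Fin T, L i s ω) ^ 2) > α * T * K}
      ≤ ENNReal.ofReal δ := by
  obtain ⟨hα₀, hα₁⟩ := hα
  set ε := 1 / 2 * √(α / 2 * (1 - α / 2) * K / T)
  set p : Fin K → ℝ := fun i => if i = j then α / 2 else α / 2 + ε
  have hε₀ : 0 ≤ ε := by positivity
  have hε : ε ≤ α / 8 := half_sqrt_le_of_ge hα₀ K.cast_nonneg hT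
  have hp₀ : ∀ i, 0 ≤ p i := fun i => by dsimp only [p]; split_ifs <;> linarith
  have hp : ∀ i, p i ≤ 5 * α / 8 := fun i => by dsimp only [p]; split_ifs <;> linarith
  have hQ : ∀ᵐ ω ∂μ, ∑ t : Fin T, ∑ i : Fin K,
      (L i t ω - (1 / (T : ℝ)) * ∑ s : Fin T, L i s ω) ^ 2
        ≤ ∑ q : Fin K × Fin T, L q.1 q.2 ω := by
    filter_upwards [ae_all_iff.2 fun q : Fin K × Fin T =>
      ae_mem_Icc_of_map_eq_bern (hmeas q.1 q.2) (hdist q.1 q.2)] with ω hω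
    simpa using sum_sum_sq_sub_mean_le_sum_prod (fun i t => L i t ω) fun i t => hω (i, t)
  have hchernoff := measure_sum_ge_le_of_map_eq_bern
    (X := fun q : Fin K × Fin T => L q.1 q.2) (p := fun q => p q.1)
    (fun q => hmeas q.1 q.2) hindep (fun q => hdist q.1 q.2) (fun q => hp₀ q.1)
    (fun q => (hp q.1).trans (by linarith)) (log_nonneg one_le_two) (α * T * K)
  have hsum_p : ∑ q : Fin K × Fin T, p q.1 ≤ 5 / 8 * (α * T * K) := by
    calc ∑ q : Fin K × Fin T, p q.1 ≤ ∑ _q : Fin K × Fin T, 5 * α / 8 :=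
          Finset.sum_le_sum fun q _ => hp q.1
      _ = 5 / 8 * (α * T * K) := by simp; ring
  have hexponent : -log 2 * (α * T * K) + (exp (log 2) - 1) * ∑ q : Fin K × Fin T, p q.1
      ≤ log δ := by
    rw [exp_log two_pos]
    have := mul_log_two_sub_le_log (x := α * T) (K := K) (by exact_mod_cast hK) hδ.1
      (by positivity) (by linarith)
    linarith
  calc _ ≤ μ {ω | α * T * K ≤ ∑ q : Fin K × Fin T, L q.1 q.2 ω} :=
        measure_mono_ae (hQ.mono fun ω hle hgt => hgt.le.trans hle)
    _ = ENNReal.ofReal (μ.real {ω | α * T * K ≤ ∑ q : Fin K × Fin T, L q.1 q.2 ω}) :=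
        (ofReal_measureReal (measure_ne_top _ _)).symm
    _ ≤ ENNReal.ofReal δ := ENNReal.ofReal_le_ofReal <| hchernoff.trans <| by
        rw [← exp_log hδ.1]; exact exp_le_exp.2 hexponent

end BanditLB
end
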